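/- arXiv:2402.13530 — 8 statements merged into one kernel-verified Lean document; each statement's English description precedes it below -/
import Mathlib

section
/- Deterministic adversarial guarantee for the Mirror Descent Algorithm (finite-horizon form of Proposition 2(2)): let α ≥ 1 satisfy g_t(x)_j ≤ α ρ_j for all t ∈ {1,…,T}, all x ∈ X_t and all j; let ρ̲ = min_j ρ_j, ρ̄ = max_j ρ_j, let ḡ ≥ 0 satisfy ‖g_t(x)‖_∞ ≤ ḡ for all t and x ∈ X_t, let e_j denote the j-th standard basis vector of ℝ^m, and let η > 0. Suppose sequences (μ_t)_{t=1}^{T+1} in {μ ∈ ℝ^m : μ ≥ 0}, (x_t)_{t=1}^{T}, and (G_t)_{t=1}^{T+1} in ℝ^m satisfy: G_1 = Tρ; for each t, x_t ∈ X_t, g_t(x_t) ≤ G_t componentwise, and r_t(x_t) − μ_t·g_t(x_t) ≥ r_t(x) − μ_t·g_t(x) for every x ∈ X_t with g_t(x) ≤ G_t componentwise; G_{t+1} = G_t − g_t(x_t); and μ_{t+1} minimizes μ ↦ (ρ − g_t(x_t))·μ + (1/η)·V_h(μ, μ_t) over {μ ∈ ℝ^m : μ ≥ 0}. Then OPT −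 α·Σ_{t=1}^{T} r_t(x_t) ≤ r̄ḡ/ρ̲ + α·( (ḡ + ρ̄)²·η·T/(2σ) + (1/η)·max{ V_h(μ, μ_1) : μ ∈ {0} ∪ { (r̄/(α ρ_j))·e_j : j ∈ {1,…,m} } } ). -/
/-!
Let `τ` be the first period in which some resource `j` has less than `ḡ` left (`τ = T` if there is
none). Before `τ` every action of any offline plan is affordable, so the dual-greedy choice gives
`r_t(y_t) ≤ α r_t(x_t) + α (ρ - g_t(x_t))·μ_t`; from `τ` on, each period costs at most `r̄`.
The prices `μ_t` run online mirror descent on the linear losses `μ ↦ (ρ - g_t(x_t))·μ`, whose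
regret against a fixed comparator `ν` is at most `(ḡ + ρ̄)² η T / (2σ) + V_h(ν, μ_1) / η`.
Comparing with `ν = 0` if `τ = T`, and with `ν = (r̄ / (α ρ_j)) e_j` for the depleted resource `j`
otherwise, turns the consumption of `j` before `τ` (more than `Tρ_j - ḡ`) into a gain that pays
for the `(T - τ) r̄` lost after `τ`, up to `r̄ ḡ / ρ̲`.
-/

open Finset

theorem Fin.sum_filter_castSucc_lt_succ {T : ℕ} {M : Type*} [AddCommMonoid M] (f : Fin T → M)
    (t : Fin T) :
    ∑ s with s.castSucc < t.succ, f s = ∑ s with s.castSucc < t.castSucc, f s + f t := by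
  have : univ.filter (fun s : Fin T => s.castSucc < t.succ) =
      insert t (univ.filter fun s => s.castSucc < t.castSucc) := by
    ext s
    simp only [mem_filter, mem_univ, true_and, mem_insert, Fin.castSucc_lt_castSucc_iff,
      Fin.castSucc_lt_succ_iff, le_iff_eq_or_lt]
  rw [this, sum_insert (by simp), add_comm]

theorem Fin.eq_sub_sum_of_succ_eq_sub {T : ℕ} {M : Type*} [AddCommGroup M] {G : Fin (T + 1) → M}
    {c : Fin T → M} (hG : ∀ t, G t.succ = G t.castSucc - c t) (τ : Fin (T + 1)) :
    G τ = G 0 - ∑ t with t.castSucc < τ, c t := by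
  induction τ using Fin.induction with
  | zero => simp
  | succ t ih => rw [hG, ih, Fin.sum_filter_castSucc_lt_succ, sub_add_eq_sub_sub]

theorem exists_forall_lt_and_eq_or_not {α : Type*} [LinearOrder α] [WellFoundedLT α]
    (P : α → Prop) (a : α) : ∃ τ, (∀ s < τ, P s) ∧ (τ = a ∨ ¬P τ) := by
  obtain ⟨τ, hτ, hmin⟩ := wellFounded_lt.has_min {s | s = a ∨ ¬P s} ⟨a, Or.inl rfl⟩
  exact ⟨τ, fun s hs => by_contra fun hP => hmin s (Or.inr hP) hs, hτ⟩

theorem Fin.card_filter_castSucc_lt {T : ℕ} (τ : Fin (T + 1)) :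
    #{t : Fin T | t.castSucc < τ} = τ := by
  have := Fin.card_filter_val_lt (n := T) (m := τ)
  simp only [Fin.lt_def, Fin.val_castSucc]
  rw [this]
  omega

section Bregman

variable {ι : Type*} [Fintype ι] {h : (ι → ℝ) → ℝ} {h' : (ι → ℝ) → ι → ℝ} {σ : ℝ}

def bregman (h : (ι → ℝ) → ℝ) (h' : (ι → ℝ) → ι → ℝ) (u v : ι → ℝ) : ℝ :=
  h u - h v - ∑ j, h' v j * (u j - v j)

def StronglyConvexL1OnOrthant (h : (ι → ℝ) → ℝ) (h' : (ι → ℝ) → ι → ℝ) (σ : ℝ) : Prop :=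
  ∀ u v : ι → ℝ, (∀ j, 0 ≤ u j) → (∀ j, 0 ≤ v j) →
    h v + (∑ j, h' v j * (u j - v j)) + σ / 2 * (∑ j, |u j - v j|) ^ 2 ≤ h u

theorem bregman_three_point (u v w : ι → ℝ) :
    bregman h h' u v + bregman h h' v w - bregman h h' u w =
      ∑ j, (h' w j - h' v j) * (u j - v j) := by
  simp only [bregman, mul_sub, sub_mul, sum_sub_distrib]
  ring

theorem StronglyConvexL1OnOrthant.sq_l1_le_bregman (hstrong : StronglyConvexL1OnOrthant h h' σ)
    {u v : ι → ℝ} (hu : ∀ j, 0 ≤ u j) (hv : ∀ j, 0 ≤ v j) :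
    σ / 2 * (∑ j, |u j - v j|) ^ 2 ≤ bregman h h' u v := by
  unfold bregman
  linarith [hstrong u v hu hv]

theorem bregman_prox_optimality
    (hdiff : ∀ v, HasFDerivAt h (∑ j, h' v j • (ContinuousLinearMap.proj j : (ι → ℝ) →L[ℝ] ℝ)) v)
    (c : ℝ) (w b p : ι → ℝ) (hp : ∀ j, 0 ≤ p j)
    (hmin : ∀ ν : ι → ℝ, (∀ j, 0 ≤ ν j) →
      ∑ j, w j * p j + c * bregman h h' p b ≤ ∑ j, w j * ν j + c * bregman h h' ν b)
    {ν : ι → ℝ} (hν : ∀ j, 0 ≤ ν j) :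
    0 ≤ ∑ j, (w j + c * (h' p j - h' b j)) * (ν j - p j) := by
  have hlin : ∀ a : ι → ℝ, HasFDerivAt (fun u : ι → ℝ => ∑ j, a j * u j)
      (∑ j, a j • (ContinuousLinearMap.proj j : (ι → ℝ) →L[ℝ] ℝ)) p := fun a => by
    simpa only [Finset.sum_fn] using HasFDerivAt.sum fun j _ =>
      (hasFDerivAt_apply (𝕜 := ℝ) (F' := fun _ : ι => ℝ) j p).const_mul (a j)
  have hF : HasFDerivAt (fun u => ∑ j, w j * u j + c * bregman h h' u b)
      (∑ j, (w j + c * (h' p j - h' b j)) • (ContinuousLinearMap.proj j : (ι → ℝ) →L[ℝ] ℝ))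
      p := by
    have := (hlin w).add ((((hdiff p).sub_const (h b)).sub
      ((hlin (h' b)).sub_const (∑ j, h' b j * b j))).const_mul c)
    refine (this.congr_fderiv ?_).congr_of_eventuallyEq (Filter.Eventually.of_forall fun u => ?_)
    · ext k
      simp [add_mul, mul_sub, sub_mul, sum_add_distrib, sum_sub_distrib, mul_sum, mul_assoc]
    · simp only [bregman, mul_sub, sum_sub_distrib, Pi.add_apply, Pi.sub_apply]
  have hmin' : IsMinOn (fun u => ∑ j, w j * u j + c * bregman h h' u b) (Set.Ici 0) p :=
    fun ν hν => hmin ν hν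
  have := hmin'.localize.hasFDerivWithinAt_nonneg hF.hasFDerivWithinAt
    (sub_mem_posTangentConeAt_of_segment_subset ((convex_Ici 0).segment_subset hp hν))
  simpa using this

theorem mirror_descent_step
    (hdiff : ∀ v, HasFDerivAt h (∑ j, h' v j • (ContinuousLinearMap.proj j : (ι → ℝ) →L[ℝ] ℝ)) v)
    {η K : ℝ} (hσ : 0 < σ) (hη : 0 < η)
    (hstrong : StronglyConvexL1OnOrthant h h' σ)
    {w a b : ι → ℝ} (hw : ∀ j, |w j| ≤ K) (ha : ∀ j, 0 ≤ a j) (hb : ∀ j, 0 ≤ b j)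
    (hmin : ∀ ν : ι → ℝ, (∀ j, 0 ≤ ν j) →
      ∑ j, w j * b j + 1 / η * bregman h h' b a ≤ ∑ j, w j * ν j + 1 / η * bregman h h' ν a)
    {ν : ι → ℝ} (hν : ∀ j, 0 ≤ ν j) :
    ∑ j, w j * (a j - ν j) ≤
      K ^ 2 * η / (2 * σ) + 1 / η * (bregman h h' ν a - bregman h h' ν b) := by
  set δ := ∑ j, |b j - a j|
  have hfoc := bregman_prox_optimality hdiff (1 / η) w a b hb hmin hν
  have hthree := bregman_three_point (h := h) (h' := h') ν b a
  have hfoc_split : ∑ j, (w j + 1 / η * (h' b j - h' a j)) * (ν j - b j) =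
      ∑ j, w j * (ν j - b j) - 1 / η * ∑ j, (h' a j - h' b j) * (ν j - b j) := by
    rw [mul_sum, ← sum_sub_distrib]
    exact sum_congr rfl fun j _ => by ring
  have hsplit : ∑ j, w j * (a j - ν j) = ∑ j, w j * (a j - b j) - ∑ j, w j * (ν j - b j) := by
    rw [← sum_sub_distrib]
    exact sum_congr rfl fun j _ => by ring
  have hholder : ∑ j, w j * (a j - b j) ≤ K * δ := by
    rw [mul_sum]
    refine sum_le_sum fun j _ => ?_
    rw [abs_sub_comm]
    calc w j * (a j - b j) ≤ |w j| * |a j - b j| := (le_abs_self _).trans (abs_mul _ _).le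
      _ ≤ K * |a j - b j| := mul_le_mul_of_nonneg_right (hw j) (abs_nonneg _)
  have hstrong_step : 1 / η * (σ / 2 * δ ^ 2) ≤ 1 / η * bregman h h' b a :=
    mul_le_mul_of_nonneg_left (hstrong.sq_l1_le_bregman hb ha) (by positivity)
  have hyoung : K * δ ≤ K ^ 2 * η / (2 * σ) + 1 / η * (σ / 2 * δ ^ 2) := by
    have : K ^ 2 * η / (2 * σ) + 1 / η * (σ / 2 * δ ^ 2) - K * δ =
        (η * K - σ * δ) ^ 2 / (2 * σ * η) := by
      field_simp
      ring
    linarith [div_nonneg (sq_nonneg (η * K - σ * δ)) (by positivity : (0 : ℝ) ≤ 2 * σ * η)]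
  -- `hfoc` and `hthree` give `w·(a - ν) ≤ w·(a - b) - (V(ν, b) + V(b, a) - V(ν, a)) / η`.
  linear_combination hsplit + hholder + hyoung + hstrong_step + hfoc + hfoc_split + 1 / η * hthree

theorem mirror_descent_regret
    (hdiff : ∀ v, HasFDerivAt h (∑ j, h' v j • (ContinuousLinearMap.proj j : (ι → ℝ) →L[ℝ] ℝ)) v)
    {η K : ℝ} (hσ : 0 < σ) (hη : 0 < η) (hstrong : StronglyConvexL1OnOrthant h h' σ)
    {T : ℕ} {w : Fin T → ι → ℝ} {μ : Fin (T + 1) → ι → ℝ} (hw : ∀ t j, |w t j| ≤ K)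
    (hμ : ∀ s j, 0 ≤ μ s j)
    (hmin : ∀ t ν, (∀ j, 0 ≤ ν j) →
      ∑ j, w t j * μ t.succ j + 1 / η * bregman h h' (μ t.succ) (μ t.castSucc) ≤
        ∑ j, w t j * ν j + 1 / η * bregman h h' ν (μ t.castSucc))
    {ν : ι → ℝ} (hν : ∀ j, 0 ≤ ν j) (τ : Fin (T + 1)) :
    ∑ t with t.castSucc < τ, ∑ j, w t j * (μ t.castSucc j - ν j) ≤
      K ^ 2 * η * T / (2 * σ) + 1 / η * bregman h h' ν (μ 0) := by
  have htele : ∀ τ : Fin (T + 1),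
      ∑ t with t.castSucc < τ, ∑ j, w t j * (μ t.castSucc j - ν j) ≤ τ * (K ^ 2 * η / (2 * σ)) +
        (1 / η * bregman h h' ν (μ 0) - 1 / η * bregman h h' ν (μ τ)) := by
    intro τ
    induction τ using Fin.induction with
    | zero => simp
    | succ t ih =>
      have := mirror_descent_step hdiff hσ hη hstrong (hw t) (hμ _) (hμ _) (hmin t) hν
      rw [Fin.val_castSucc] at ih
      rw [mul_sub] at this
      rw [Fin.sum_filter_castSucc_lt_succ, Fin.val_succ]
      push_cast
      linarith
  have hlast : 0 ≤ 1 / η * bregman h h' ν (μ τ) :=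
    mul_nonneg (by positivity) ((by positivity : (0 : ℝ) ≤ σ / 2 * _).trans
      (hstrong.sq_l1_le_bregman hν (hμ τ)))
  have hτT : τ * (K ^ 2 * η / (2 * σ)) ≤ K ^ 2 * η * T / (2 * σ) := by
    rw [mul_div_assoc', mul_comm (τ : ℝ)]
    gcongr
    exact_mod_cast τ.is_le
  linarith [htele τ]

end Bregman

theorem reward_le_of_dual_greedy {E ι : Type*} [Zero E] [Fintype ι] {X : Set E} {r : E → ℝ}
    {g : E → ι → ℝ} {x y : E} {α : ℝ} {ρ μ B : ι → ℝ} (hα : 1 ≤ α) (hμ : ∀ j, 0 ≤ μ j)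
    (hX0 : 0 ∈ X) (hr0 : r 0 = 0) (hg0 : g 0 = 0) (hB : ∀ j, 0 ≤ B j)
    (hgreedy : ∀ z ∈ X, (∀ j, g z j ≤ B j) →
      r z - ∑ j, μ j * g z j ≤ r x - ∑ j, μ j * g x j)
    (hy : y ∈ X) (hyB : ∀ j, g y j ≤ B j) (hyα : ∀ j, g y j ≤ α * ρ j) :
    r y ≤ α * r x + α * ∑ j, (ρ j - g x j) * μ j := by
  have hnull : ∑ j, μ j * g x j ≤ r x := by
    simpa [hr0, hg0] using hgreedy 0 hX0 (by simpa [hg0] using hB)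
  have hcost : ∑ j, μ j * g y j ≤ α * ∑ j, μ j * ρ j := by
    rw [mul_sum]
    exact sum_le_sum fun j _ => by linarith [mul_le_mul_of_nonneg_left (hyα j) (hμ j)]
  have hsplit : ∑ j, (ρ j - g x j) * μ j = ∑ j, μ j * ρ j - ∑ j, μ j * g x j := by
    rw [← sum_sub_distrib]
    exact sum_congr rfl fun j _ => by ring
  rw [hsplit]
  linarith [hgreedy y hy hyB, mul_nonneg (sub_nonneg.2 hα) (sub_nonneg.2 hnull)]

theorem exists_comparator_le {ι : Type*} [Fintype ι] [DecidableEq ι] {T : ℕ} {τ : Fin (T + 1)}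
    {ρ : ι → ℝ} {gx : Fin T → ι → ℝ} {ρlo rbar ghi α : ℝ} (hρlo : 0 < ρlo)
    (hρlo_le : ∀ j, ρlo ≤ ρ j) (hrbar : 0 ≤ rbar) (hghi : 0 ≤ ghi) (hα : 0 < α)
    (hend : τ = Fin.last T ∨ ∃ j, T * ρ j - ∑ t with t.castSucc < τ, gx t j < ghi) :
    ∃ ν ∈ insert 0 (Set.range fun j => Pi.single j (rbar / (α * ρ j))), (∀ j, 0 ≤ ν j) ∧
      α * ∑ t with t.castSucc < τ, ∑ j, (ρ j - gx t j) * ν j + (T - τ) * rbar ≤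
        rbar * ghi / ρlo := by
  rcases hend with rfl | ⟨j, hj⟩
  · exact ⟨0, Set.mem_insert _ _, fun _ => le_rfl, by simp; positivity⟩
  have hρj : 0 < ρ j := hρlo.trans_le (hρlo_le j)
  have hc : 0 ≤ rbar / (α * ρ j) := by positivity
  refine ⟨_, Set.mem_insert_of_mem _ ⟨j, rfl⟩, fun i => ?_, ?_⟩
  · dsimp only
    rw [Pi.single_apply]
    split_ifs
    exacts [hc, le_rfl]
  have hsingle : ∀ t, ∑ i, (ρ i - gx t i) * (Pi.single j (rbar / (α * ρ j)) : ι → ℝ) i =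
      (ρ j - gx t j) * (rbar / (α * ρ j)) := fun t => by
    simp [Pi.single_apply]
  simp only [hsingle, ← sum_mul, sum_sub_distrib, sum_const, Fin.card_filter_castSucc_lt,
    nsmul_eq_mul]
  calc α * ((τ * ρ j - ∑ t with t.castSucc < τ, gx t j) * (rbar / (α * ρ j))) + (T - τ) * rbar
      = rbar / ρ j * (T * ρ j - ∑ t with t.castSucc < τ, gx t j) := by field_simp; ring
    _ ≤ rbar / ρ j * ghi := by gcongr
    _ ≤ rbar * ghi / ρlo := by
      rw [div_mul_eq_mul_div]
      exact div_le_div_of_nonneg_left (by positivity) hρlo (hρlo_le j)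

theorem sum_le_of_dual_regret {ι : Type*} [Fintype ι] [DecidableEq ι] {T : ℕ} {ρ : ι → ℝ}
    {ρlo rbar ghi α R : ℝ} (hρlo : 0 < ρlo) (hρlo_le : ∀ j, ρlo ≤ ρ j) (hrbar : 0 ≤ rbar)
    (hghi : 0 ≤ ghi) (hα : 0 < α) {a b : Fin T → ℝ} {gx : Fin T → ι → ℝ}
    {μ G : Fin (T + 1) → ι → ℝ} (ha : ∀ t, a t ≤ rbar) (hb : ∀ t, 0 ≤ b t)
    (hG0 : ∀ j, G 0 j = T * ρ j) (hG : ∀ t j, G t.succ j = G t.castSucc j - gx t j)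
    (hstep : ∀ t, (∀ j, ghi ≤ G t.castSucc j) →
      a t ≤ α * b t + α * ∑ j, (ρ j - gx t j) * μ t.castSucc j)
    (hregret : ∀ ν ∈ insert 0 (Set.range fun j => Pi.single j (rbar / (α * ρ j))),
      (∀ j, 0 ≤ ν j) → ∀ τ : Fin (T + 1),
        ∑ t with t.castSucc < τ, ∑ j, (ρ j - gx t j) * (μ t.castSucc j - ν j) ≤ R) :
    ∑ t, a t ≤ α * ∑ t, b t + (rbar * ghi / ρlo + α * R) := by
  have hbudget : ∀ τ j, G τ j = T * ρ j - ∑ t with t.castSucc < τ, gx t j := fun τ j => by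
    rw [Fin.eq_sub_sum_of_succ_eq_sub (G := fun s => G s j) (fun t => hG t j) τ, hG0]
  obtain ⟨τ, hbig, hend⟩ :=
    exists_forall_lt_and_eq_or_not (fun s => ∀ j, ghi ≤ G s j) (Fin.last T)
  obtain ⟨ν, hν, hν0, hντ⟩ := exists_comparator_le hρlo hρlo_le hrbar hghi hα <|
    hend.imp_right fun hτ => by
      obtain ⟨j, hj⟩ := not_forall.mp hτ
      exact ⟨j, hbudget τ j ▸ not_le.mp hj⟩
  have hhead : ∑ t with t.castSucc < τ, a t ≤ α * ∑ t with t.castSucc < τ, b t +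
      α * ∑ t with t.castSucc < τ, ∑ j, (ρ j - gx t j) * μ t.castSucc j := by
    rw [mul_sum, mul_sum, ← sum_add_distrib]
    exact sum_le_sum fun t ht => hstep t (hbig _ (mem_filter.mp ht).2)
  have htail : ∑ t with ¬t.castSucc < τ, a t ≤ (T - τ) * rbar := by
    have hcard : #{t : Fin T | ¬t.castSucc < τ} = T - τ := by
      rw [filter_not, card_sdiff_of_subset (filter_subset _ _), Fin.card_filter_castSucc_lt,
        card_univ, Fintype.card_fin]
    calc ∑ t with ¬t.castSucc < τ, a t ≤ #{t : Fin T | ¬t.castSucc < τ} • rbar :=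
          sum_le_card_nsmul _ _ _ fun t _ => ha t
      _ = (T - τ) * rbar := by rw [hcard, nsmul_eq_mul, Nat.cast_sub τ.is_le]
  have honline : ∑ t with t.castSucc < τ, b t ≤ ∑ t, b t :=
    sum_le_sum_of_subset_of_nonneg (filter_subset _ _) fun t _ _ => hb t
  have hdual : ∑ t with t.castSucc < τ, ∑ j, (ρ j - gx t j) * μ t.castSucc j =
      ∑ t with t.castSucc < τ, ∑ j, (ρ j - gx t j) * (μ t.castSucc j - ν j) +
        ∑ t with t.castSucc < τ, ∑ j, (ρ j - gx t j) * ν j := by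
    rw [← sum_add_distrib]
    refine sum_congr rfl fun t _ => ?_
    rw [← sum_add_distrib]
    exact sum_congr rfl fun j _ => by ring
  rw [hdual, mul_add] at hhead
  rw [← sum_filter_add_sum_filter_not univ fun t => t.castSucc < τ]
  have := mul_le_mul_of_nonneg_left (hregret ν hν hν0 τ) hα.le
  have := mul_le_mul_of_nonneg_left honline hα.le
  linarith

theorem stmt1_general
    (T m d : ℕ)
    (ρ : Fin m → ℝ) (hρ : ∀ j, 0 < ρ j)
    (rbar : ℝ) (hrbar : 0 ≤ rbar)
    (X : Fin T → Set (Fin d → ℝ))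
    (r : Fin T → (Fin d → ℝ) → ℝ)
    (g : Fin T → (Fin d → ℝ) → (Fin m → ℝ))
    (hX0 : ∀ t, (0 : Fin d → ℝ) ∈ X t)
    (hr0 : ∀ t, r t 0 = 0)
    (hrpos : ∀ t, ∀ x ∈ X t, 0 ≤ r t x)
    (hrbd : ∀ t, ∀ x ∈ X t, r t x ≤ rbar)
    (hg0 : ∀ t, g t 0 = 0)
    (hgpos : ∀ t, ∀ x ∈ X t, ∀ j, 0 ≤ g t x j)
    (OPT : ℝ)
    (hOPT : OPT = sSup { v | ∃ x : Fin T → (Fin d → ℝ),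
      (∀ t, x t ∈ X t) ∧ (∀ j, ∑ t, g t (x t) j ≤ (T : ℝ) * ρ j) ∧
      v = ∑ t, r t (x t) })
    -- reference function
    (h : (Fin m → ℝ) → ℝ) (h' : (Fin m → ℝ) → (Fin m → ℝ)) (σ : ℝ) (hσ : 0 < σ)
    (hdiff : ∀ v, HasFDerivAt h
      (∑ j, h' v j • (ContinuousLinearMap.proj j : (Fin m → ℝ) →L[ℝ] ℝ)) v)
    (hstrong : ∀ u v : Fin m → ℝ, (∀ j, 0 ≤ u j) → (∀ j, 0 ≤ v j) →
      h v + (∑ j, h' v j * (u j - v j)) + σ / 2 * (∑ j, |u j - v j|) ^ 2 ≤ h u)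
    (V : (Fin m → ℝ) → (Fin m → ℝ) → ℝ)
    (hV : ∀ u v, V u v = h u - h v - ∑ j, h' v j * (u j - v j))
    -- parameters
    (α : ℝ) (hα : 1 ≤ α)
    (hgα : ∀ t, ∀ x ∈ X t, ∀ j, g t x j ≤ α * ρ j)
    (ρlo ρhi : ℝ)
    (hρlo : IsLeast (Set.range ρ) ρlo) (hρhi : IsGreatest (Set.range ρ) ρhi)
    (ghi : ℝ) (hghi0 : 0 ≤ ghi)
    (hghi : ∀ t, ∀ x ∈ X t, ∀ j, |g t x j| ≤ ghi)
    (η : ℝ) (hη : 0 < η)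
    -- the algorithm's trajectory
    (μ : Fin (T + 1) → Fin m → ℝ) (x : Fin T → (Fin d → ℝ))
    (G : Fin (T + 1) → Fin m → ℝ)
    (hμpos : ∀ s j, 0 ≤ μ s j)
    (hG1 : ∀ j, G 0 j = (T : ℝ) * ρ j)
    (hxmem : ∀ t : Fin T, x t ∈ X t)
    (hxfeas : ∀ (t : Fin T) (j : Fin m), g t (x t) j ≤ G t.castSucc j)
    (hgreedy : ∀ t : Fin T, ∀ y ∈ X t, (∀ j, g t y j ≤ G t.castSucc j) →
      r t y - (∑ j, μ t.castSucc j * g t y j) ≤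
        r t (x t) - ∑ j, μ t.castSucc j * g t (x t) j)
    (hGupd : ∀ (t : Fin T) (j : Fin m), G t.succ j = G t.castSucc j - g t (x t) j)
    (hMD : ∀ t : Fin T, ∀ ν : Fin m → ℝ, (∀ j, 0 ≤ ν j) →
      (∑ j, (ρ j - g t (x t) j) * μ t.succ j) + (1 / η) * V (μ t.succ) (μ t.castSucc) ≤
        (∑ j, (ρ j - g t (x t) j) * ν j) + (1 / η) * V ν (μ t.castSucc))
    (Vmax : ℝ)
    (hVmax : IsGreatest ((fun ν => V ν (μ 0)) ''
      (insert (0 : Fin m → ℝ)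
        (Set.range fun j => Pi.single j (rbar / (α * ρ j))))) Vmax) :
    OPT - α * ∑ t, r t (x t) ≤
      rbar * ghi / ρlo +
        α * ((ghi + ρhi) ^ 2 * η * T / (2 * σ) + (1 / η) * Vmax) := by
  obtain rfl : V = bregman h h' := funext₂ hV
  obtain ⟨jlo, rfl⟩ := hρlo.1
  obtain ⟨jhi, rfl⟩ := hρhi.1
  have hw : ∀ t j, |ρ j - g t (x t) j| ≤ ghi + ρ jhi := fun t j => by
    rw [add_comm]
    refine (abs_sub _ _).trans (add_le_add ?_ (hghi _ _ (hxmem _) j))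
    exact (abs_of_pos (hρ j)).trans_le (hρhi.2 ⟨j, rfl⟩)
  rw [hOPT, sub_le_iff_le_add]
  refine csSup_le ⟨0, fun _ => 0, hX0,
    fun j => by simpa [hg0] using mul_nonneg T.cast_nonneg (hρ j).le, by simp [hr0]⟩ ?_
  rintro _ ⟨xs, hxs, -, rfl⟩
  refine (sum_le_of_dual_regret (μ := μ) (R := (ghi + ρ jhi) ^ 2 * η * T / (2 * σ) + 1 / η * Vmax)
    (hρ jlo) (fun j => hρlo.2 ⟨j, rfl⟩) hrbar hghi0 (one_pos.trans_le hα)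
    (fun t => hrbd t _ (hxs t)) (fun t => hrpos t _ (hxmem t)) hG1 hGupd
    (fun t hfeas => ?_) (fun ν hν hν0 τ => ?_)).trans_eq (by ring)
  · exact reward_le_of_dual_greedy hα (hμpos _) (hX0 t) (hr0 t) (hg0 t)
      (fun j => (hgpos _ _ (hxmem t) j).trans (hxfeas t j)) (hgreedy t) (hxs t)
      (fun j => (le_abs_self _).trans ((hghi _ _ (hxs t) j).trans (hfeas j))) (hgα _ _ (hxs t))
  · refine (mirror_descent_regret hdiff hσ hη hstrong hw hμpos hMD hν0 τ).trans ?_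
    gcongr
    exact hVmax.2 ⟨ν, hν, rfl⟩

/-- Proposition 2(2), finite-horizon form: deterministic adversarial guarantee
for the Mirror Descent Algorithm. -/
theorem stmt1
    (T m d : ℕ) (hT : 0 < T) (hm : 0 < m)
    (ρ : Fin m → ℝ) (hρ : ∀ j, 0 < ρ j)
    (rbar : ℝ) (hrbar : 0 ≤ rbar)
    (X : Fin T → Set (Fin d → ℝ))
    (r : Fin T → (Fin d → ℝ) → ℝ)
    (g : Fin T → (Fin d → ℝ) → (Fin m → ℝ))
    (hX0 : ∀ t, (0 : Fin d → ℝ) ∈ X t)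
    (hr0 : ∀ t, r t 0 = 0)
    (hrpos : ∀ t, ∀ x ∈ X t, 0 ≤ r t x)
    (hrbd : ∀ t, ∀ x ∈ X t, r t x ≤ rbar)
    (hg0 : ∀ t, g t 0 = 0)
    (hgpos : ∀ t, ∀ x ∈ X t, ∀ j, 0 ≤ g t x j)
    (OPT : ℝ)
    (hOPT : OPT = sSup { v | ∃ x : Fin T → (Fin d → ℝ),
      (∀ t, x t ∈ X t) ∧ (∀ j, ∑ t, g t (x t) j ≤ (T : ℝ) * ρ j) ∧
      v = ∑ t, r t (x t) })
    -- reference function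
    (h : (Fin m → ℝ) → ℝ) (h' : (Fin m → ℝ) → (Fin m → ℝ)) (σ : ℝ) (hσ : 0 < σ)
    (hdiff : ∀ v, HasFDerivAt h
      (∑ j, h' v j • (ContinuousLinearMap.proj j : (Fin m → ℝ) →L[ℝ] ℝ)) v)
    (hstrong : ∀ u v : Fin m → ℝ, (∀ j, 0 ≤ u j) → (∀ j, 0 ≤ v j) →
      h v + (∑ j, h' v j * (u j - v j)) + σ / 2 * (∑ j, |u j - v j|) ^ 2 ≤ h u)
    (V : (Fin m → ℝ) → (Fin m → ℝ) → ℝ)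
    (hV : ∀ u v, V u v = h u - h v - ∑ j, h' v j * (u j - v j))
    -- parameters
    (α : ℝ) (hα : 1 ≤ α)
    (hgα : ∀ t, ∀ x ∈ X t, ∀ j, g t x j ≤ α * ρ j)
    (ρlo ρhi : ℝ)
    (hρlo : IsLeast (Set.range ρ) ρlo) (hρhi : IsGreatest (Set.range ρ) ρhi)
    (ghi : ℝ) (hghi0 : 0 ≤ ghi)
    (hghi : ∀ t, ∀ x ∈ X t, ∀ j, |g t x j| ≤ ghi)
    (η : ℝ) (hη : 0 < η)
    -- the algorithm's trajectory
    (μ : Fin (T + 1) → Fin m → ℝ) (x : Fin T → (Fin d → ℝ))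
    (G : Fin (T + 1) → Fin m → ℝ)
    (hμpos : ∀ s j, 0 ≤ μ s j)
    (hG1 : ∀ j, G 0 j = (T : ℝ) * ρ j)
    (hxmem : ∀ t : Fin T, x t ∈ X t)
    (hxfeas : ∀ (t : Fin T) (j : Fin m), g t (x t) j ≤ G t.castSucc j)
    (hgreedy : ∀ t : Fin T, ∀ y ∈ X t, (∀ j, g t y j ≤ G t.castSucc j) →
      r t y - (∑ j, μ t.castSucc j * g t y j) ≤
        r t (x t) - ∑ j, μ t.castSucc j * g t (x t) j)
    (hGupd : ∀ (t : Fin T) (j : Fin m), G t.succ j = G t.castSucc j - g t (x t) j)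
    (hMD : ∀ t : Fin T, ∀ ν : Fin m → ℝ, (∀ j, 0 ≤ ν j) →
      (∑ j, (ρ j - g t (x t) j) * μ t.succ j) + (1 / η) * V (μ t.succ) (μ t.castSucc) ≤
        (∑ j, (ρ j - g t (x t) j) * ν j) + (1 / η) * V ν (μ t.castSucc))
    (Vmax : ℝ)
    (hVmax : IsGreatest ((fun ν => V ν (μ 0)) ''
      (insert (0 : Fin m → ℝ)
        (Set.range fun j => Pi.single j (rbar / (α * ρ j))))) Vmax) :
    OPT - α * ∑ t, r t (x t) ≤
      rbar * ghi / ρlo +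
        α * ((ghi + ρhi) ^ 2 * η * T / (2 * σ) + (1 / η) * Vmax) :=
  stmt1_general T m d ρ hρ rbar hrbar X r g hX0 hr0 hrpos hrbd hg0 hgpos OPT hOPT h h' σ hσ hdiff
    hstrong V hV α hα hgα ρlo ρhi hρlo hρhi ghi hghi0 hghi η hη μ x G hμpos hG1 hxmem hxfeas hgreedy
    hGupd hMD Vmax hVmax
end

section
/- Quantitative core of the lower bound (Proposition 5): let α > 1 and r̄ > α be real numbers, let T > 0 and s ∈ [0, T] be real, and let N₁ ∈ [0, s], N₂ ∈ [0, T − s], and K ≥ 0 be real numbers satisfying N₁ + α·K ≤ T. Then (T − N₁ − N₂) + (α/(r̄ − α))·( r̄·T/α − N₁ − r̄·K ) ≥ s. -/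
/-- Quantitative core of the lower bound (Proposition 5). -/
theorem stmt2 (α rbar T s N₁ N₂ K : ℝ)
    (hα : 1 < α) (hr : α < rbar)
    (hT : 0 < T) (hs : s ∈ Set.Icc 0 T)
    (hN₁ : N₁ ∈ Set.Icc 0 s) (hN₂ : N₂ ∈ Set.Icc 0 (T - s))
    (hK : 0 ≤ K) (hfeas : N₁ + α * K ≤ T) :
    (T - N₁ - N₂) + (α / (rbar - α)) * (rbar * T / α - N₁ - rbar * K) ≥ s := by
  obtain ⟨h1, h2⟩ := hN₂
  have hra : 0 < rbar - α := by linarith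
  have hα0 : 0 < α := by linarith
  have key : (α / (rbar - α)) * (rbar * T / α - N₁ - rbar * K) ≥ N₁ := by
    have heq : (α / (rbar - α)) * (rbar * T / α - N₁ - rbar * K)
        = (rbar * T - α * N₁ - α * rbar * K) / (rbar - α) := by
      field_simp
    rw [heq, ge_iff_le, le_div_iff₀ hra]
    nlinarith [hN₁.1, hN₁.2]
  linarith
end

section
/- Stopping-time Chernoff bound (Lemma B.1): let (Ω, F, P) be a probability space with a filtration (F_n)_{n≥0}, let c > 0, and let (x_n)_{n≥1} and (y_n)_{n≥1} be real-valued processes such that for every n ≥ 1, x_n and y_n are F_n-measurable, x_n ∈ [0, c] and y_n ∈ [0, c] almost surely, and E[x_n | F_{n−1}] ≤ E[y_n | F_{n−1}] almost surely. Then for every ε ∈ (0,1) and every μ > 0: P( there exists n ≥ 1 such that Σ_{t=1}^{n} x_t/(1+ε) − Σ_{t=1}^{n} y_t/(1−ε) ≥ ε·μ·c ) ≤ exp(−ε²·μ). -/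
open MeasureTheory Finset

/-! The process `∏_{t ≤ n} (1 + ε) ^ (x_t / c) (1 - ε) ^ (y_t / c)` is a nonnegative
supermartingale started at `1`: by Bernoulli's inequality each factor is at most
`1 + ε (x_t - y_t) / c`, whose conditional expectation is at most `1`. On the event in question
the process exceeds `exp (ε² μ)`, since `(1 + ε) log (1 + ε) ≥ ε ≥ -(1 - ε) log (1 - ε)`, so
Ville's maximal inequality `P (∃ n, A ≤ M n) ≤ E[M 0] / A`, proved by optional stopping at the
hitting time of `[A, ∞)`, gives the bound. -/

namespace Real

theorem exp_log_one_add_mul_add_log_one_sub_mul_le {ε u v : ℝ} (hε0 : 0 < ε) (hε1 : ε < 1)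
    (hu0 : 0 ≤ u) (hu1 : u ≤ 1) (hv0 : 0 ≤ v) (hv1 : v ≤ 1) :
    exp (log (1 + ε) * u + log (1 - ε) * v) ≤ 1 + ε * (u - v) := by
  have hx : exp (log (1 + ε) * u) ≤ 1 + u * ε := by
    rw [← rpow_def_of_pos (by linarith)]
    exact rpow_one_add_le_one_add_mul_self (by linarith) hu0 hu1
  have hy : exp (log (1 - ε) * v) ≤ 1 + v * -ε := by
    rw [← rpow_def_of_pos (by linarith), sub_eq_add_neg]
    exact rpow_one_add_le_one_add_mul_self (by linarith) hv0 hv1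
  calc exp (log (1 + ε) * u + log (1 - ε) * v)
      ≤ (1 + u * ε) * (1 + v * -ε) := by
        rw [exp_add]; exact mul_le_mul hx hy (exp_pos _).le (by positivity)
    _ ≤ 1 + ε * (u - v) := by nlinarith [mul_nonneg (mul_nonneg hu0 hv0) (sq_nonneg ε)]

theorem log_one_add_mul_add_log_one_sub_mul_le {ε u v : ℝ} (hε0 : 0 < ε) (hε1 : ε < 1)
    (hu : u ≤ 1) (hv : 0 ≤ v) : log (1 + ε) * u + log (1 - ε) * v ≤ log (1 + ε) :=
  add_le_of_le_of_nonpos (mul_le_of_le_one_right (log_nonneg (by linarith)) hu)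
    (mul_nonpos_of_nonpos_of_nonneg (log_nonpos (by linarith) (by linarith)) hv)

theorem mul_le_log_one_add_mul_add_log_one_sub_mul {ε a b k : ℝ} (hε0 : 0 < ε) (hε1 : ε < 1)
    (hb : 0 ≤ b) (hk : 0 ≤ k) (h : k ≤ a / (1 + ε) - b / (1 - ε)) :
    ε * k ≤ log (1 + ε) * a + log (1 - ε) * b := by
  have hε1' : 0 < 1 - ε := by linarith
  have hb' : 0 ≤ b / (1 - ε) := div_nonneg hb hε1'.le
  have hx : ε * (a / (1 + ε)) ≤ log (1 + ε) * a :=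
    calc ε * (a / (1 + ε)) ≤ (1 + ε) * log (1 + ε) * (a / (1 + ε)) :=
          mul_le_mul_of_nonneg_right
            (by linarith [self_sub_one_le_mul_log (x := 1 + ε) (by linarith)]) (by linarith)
      _ = log (1 + ε) * a := by field_simp
  have hy : -ε * (b / (1 - ε)) ≤ log (1 - ε) * b :=
    calc -ε * (b / (1 - ε)) ≤ (1 - ε) * log (1 - ε) * (b / (1 - ε)) :=
          mul_le_mul_of_nonneg_right (by linarith [self_sub_one_le_mul_log hε1'.le]) hb'
      _ = log (1 - ε) * b := by field_simp
  linarith [mul_le_mul_of_nonneg_left h hε0.le]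

end Real

namespace MeasureTheory

variable {Ω : Type*} {m0 : MeasurableSpace Ω} {P : Measure Ω} {ℱ : Filtration ℕ m0}

theorem Supermartingale.mul_measureReal_exists_le_le [IsFiniteMeasure P] {M : ℕ → Ω → ℝ}
    (hM : Supermartingale M ℱ P) (hnn : ∀ n, 0 ≤ᵐ[P] M n) (A : ℝ) (N : ℕ) :
    A * P.real {ω | ∃ k ≤ N, A ≤ M k ω} ≤ ∫ ω, M 0 ω ∂P := by
  set τ : Ω → ℕ∞ := fun ω => (hittingBtwn M (Set.Ici A) 0 N ω : ℕ)
  have hτ : IsStoppingTime ℱ τ :=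
    hM.stronglyAdapted.adapted.isStoppingTime_hittingBtwn measurableSet_Ici
  have hτN : ∀ ω, τ ω ≤ N := fun ω => WithTop.coe_le_coe.mpr (hittingBtwn_le ω)
  have hint : Integrable (stoppedValue M τ) P := integrable_stoppedValue ℕ hτ hM.integrable hτN
  have hS : MeasurableSet {ω | ∃ k ≤ N, A ≤ M k ω} := by
    have := fun k => (hM.stronglyMeasurable k).measurable.le (ℱ.le k)
    measurability
  calc A * P.real {ω | ∃ k ≤ N, A ≤ M k ω}
      ≤ ∫ ω in {ω | ∃ k ≤ N, A ≤ M k ω}, stoppedValue M τ ω ∂P :=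
        setIntegral_ge_of_const_le_real hS (measure_ne_top _ _)
          (fun ω ⟨k, hk, hAk⟩ => stoppedValue_hittingBtwn_mem ⟨k, ⟨Nat.zero_le k, hk⟩, hAk⟩)
          hint.integrableOn
    _ ≤ ∫ ω, stoppedValue M τ ω ∂P :=
        setIntegral_le_integral hint ((ae_all_iff.2 hnn).mono fun ω hω => hω _)
    _ ≤ ∫ ω, stoppedValue M (fun _ => (0 : ℕ)) ω ∂P := by
        have h := hM.neg.expected_stoppedValue_mono (isStoppingTime_const ℱ 0) hτ
          (fun _ => bot_le) hτN
        simp only [stoppedValue, Pi.neg_apply, integral_neg, neg_le_neg_iff] at h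
        exact h
    _ = ∫ ω, M 0 ω ∂P := rfl

theorem Supermartingale.measure_exists_le_le [IsFiniteMeasure P] {M : ℕ → Ω → ℝ}
    (hM : Supermartingale M ℱ P) (hnn : ∀ n, 0 ≤ᵐ[P] M n) {A : ℝ} (hA : 0 < A) :
    P {ω | ∃ n, A ≤ M n ω} ≤ ENNReal.ofReal ((∫ ω, M 0 ω ∂P) / A) := by
  have hunion : {ω | ∃ n, A ≤ M n ω} = ⋃ N, {ω | ∃ k ≤ N, A ≤ M k ω} := by
    ext ω
    simp only [Set.mem_ofPred_eq, Set.mem_iUnion]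
    exact ⟨fun ⟨n, hn⟩ => ⟨n, n, le_rfl, hn⟩, fun ⟨_, k, _, hk⟩ => ⟨k, hk⟩⟩
  have hmono : Monotone fun N => {ω | ∃ k ≤ N, A ≤ M k ω} :=
    fun _ _ hab _ ⟨k, hk, hAk⟩ => ⟨k, hk.trans hab, hAk⟩
  rw [hunion, hmono.measure_iUnion]
  refine iSup_le fun N => ?_
  rw [ENNReal.le_ofReal_iff_toReal_le (measure_ne_top _ _)
    (div_nonneg (integral_nonneg_of_ae (hnn 0)) hA.le), le_div_iff₀' hA]
  exact hM.mul_measureReal_exists_le_le hnn A N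

theorem condExp_le_one_of_ae_le_one_add_smul_sub [IsFiniteMeasure P] {m : MeasurableSpace Ω}
    (hm : m ≤ m0) {R X Y : Ω → ℝ} {κ : ℝ} (hκ : 0 ≤ κ) (hR : Integrable R P)
    (hX : Integrable X P) (hY : Integrable Y P) (hRXY : R ≤ᵐ[P] 1 + κ • (X - Y))
    (hXY : P[X|m] ≤ᵐ[P] P[Y|m]) : P[R|m] ≤ᵐ[P] 1 := by
  have hXY' : Integrable (κ • (X - Y)) P := (hX.sub hY).smul κ
  filter_upwards [condExp_mono (m := m) hR ((integrable_const 1).add hXY') hRXY,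
    condExp_add (f := 1) (integrable_const 1) hXY' m, condExp_smul κ (X - Y) m,
    condExp_sub hX hY m, hXY]
    with ω hmono hadd hsmul hsub hω
  have h1 : P[(1 : Ω → ℝ)|m] ω = 1 := congrFun (condExp_const hm (1 : ℝ)) ω
  simp only [Pi.add_apply, Pi.smul_apply, Pi.sub_apply, Pi.one_apply, smul_eq_mul]
    at hadd hsmul hsub ⊢
  rw [hadd, h1, hsmul, hsub] at hmono
  nlinarith [mul_le_mul_of_nonneg_left hω hκ]

theorem Integrable.exp_of_ae_le [IsFiniteMeasure P] {f : Ω → ℝ} (hf : AEStronglyMeasurable f P)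
    {B : ℝ} (hB : ∀ᵐ ω ∂P, f ω ≤ B) : Integrable (fun ω => Real.exp (f ω)) P :=
  .of_bound (Real.continuous_exp.comp_aestronglyMeasurable hf) (Real.exp B) <|
    hB.mono fun ω hω => by simpa only [Real.norm_eq_abs, Real.abs_exp, Real.exp_le_exp]

theorem supermartingale_exp_sum_Icc [IsFiniteMeasure P] {D : ℕ → Ω → ℝ} {B : ℝ}
    (hDm : ∀ n, 1 ≤ n → Measurable[ℱ n] (D n)) (hDB : ∀ n, 1 ≤ n → ∀ᵐ ω ∂P, D n ω ≤ B)
    (hDc : ∀ n, P[fun ω => Real.exp (D (n + 1) ω)|ℱ n] ≤ᵐ[P] 1) :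
    Supermartingale (fun n ω => Real.exp (∑ t ∈ Icc 1 n, D t ω)) ℱ P := by
  have hSm : ∀ n, Measurable[ℱ n] fun ω => ∑ t ∈ Icc 1 n, D t ω := fun n =>
    Finset.measurable_sum _ fun t ht =>
      (hDm t (mem_Icc.1 ht).1).mono (ℱ.mono (mem_Icc.1 ht).2) le_rfl
  have hSB : ∀ n, ∀ᵐ ω ∂P, ∑ t ∈ Icc 1 n, D t ω ≤ n * B := fun n => by
    filter_upwards [(Filter.eventually_all_finset _).2 fun t ht => hDB t (mem_Icc.1 ht).1]
      with ω hω
    simpa using Finset.sum_le_card_nsmul (Icc 1 n) (fun t => D t ω) B hω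
  have hadp : StronglyAdapted ℱ fun n ω => Real.exp (∑ t ∈ Icc 1 n, D t ω) := fun n =>
    (Real.measurable_exp.comp (hSm n)).stronglyMeasurable
  have hint : ∀ n, Integrable (fun ω => Real.exp (∑ t ∈ Icc 1 n, D t ω)) P := fun n =>
    .exp_of_ae_le ((hSm n).le (ℱ.le n)).aestronglyMeasurable (hSB n)
  refine supermartingale_nat hadp hint fun n => ?_
  have hsucc : (fun ω => Real.exp (∑ t ∈ Icc 1 (n + 1), D t ω)) =
      (fun ω => Real.exp (∑ t ∈ Icc 1 n, D t ω)) * fun ω => Real.exp (D (n + 1) ω) := by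
    ext ω
    rw [sum_Icc_succ_top (Nat.le_add_left 1 n), Real.exp_add, Pi.mul_apply]
  have hpull := condExp_mul_of_stronglyMeasurable_left (hadp n) (hsucc ▸ hint (n + 1))
    (.exp_of_ae_le ((hDm (n + 1) (Nat.le_add_left 1 n)).le (ℱ.le _)).aestronglyMeasurable
      (hDB (n + 1) (Nat.le_add_left 1 n)))
  rw [hsucc]
  filter_upwards [hpull, hDc n] with ω hω h1
  rw [hω, Pi.mul_apply]
  exact mul_le_of_le_one_right (Real.exp_pos _).le h1

/-- `∏_{t=1}^n (1 + ε) ^ (x_t / c) * (1 - ε) ^ (y_t / c)`, written as an exponential. -/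
noncomputable def chernoffProcess (ε c : ℝ) (x y : ℕ → Ω → ℝ) (n : ℕ) (ω : Ω) : ℝ :=
  Real.exp ((Real.log (1 + ε) * ∑ t ∈ Icc 1 n, x t ω
    + Real.log (1 - ε) * ∑ t ∈ Icc 1 n, y t ω) / c)

@[simp]
theorem chernoffProcess_zero (ε c : ℝ) (x y : ℕ → Ω → ℝ) : chernoffProcess ε c x y 0 = 1 := by
  ext ω
  simp [chernoffProcess]

theorem supermartingale_chernoffProcess [IsFiniteMeasure P] {c ε : ℝ} (hc : 0 < c)
    (hε0 : 0 < ε) (hε1 : ε < 1) {x y : ℕ → Ω → ℝ}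
    (hxm : ∀ n, 1 ≤ n → Measurable[ℱ n] (x n)) (hym : ∀ n, 1 ≤ n → Measurable[ℱ n] (y n))
    (hxb : ∀ n, 1 ≤ n → ∀ᵐ ω ∂P, x n ω ∈ Set.Icc 0 c)
    (hyb : ∀ n, 1 ≤ n → ∀ᵐ ω ∂P, y n ω ∈ Set.Icc 0 c)
    (hcond : ∀ n, 1 ≤ n → ∀ᵐ ω ∂P, (P[x n|ℱ (n - 1)]) ω ≤ (P[y n|ℱ (n - 1)]) ω) :
    Supermartingale (chernoffProcess ε c x y) ℱ P := by
  set D : ℕ → Ω → ℝ := fun t ω =>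
    Real.log (1 + ε) * (x t ω / c) + Real.log (1 - ε) * (y t ω / c)
  have hprocess : chernoffProcess ε c x y = fun n ω => Real.exp (∑ t ∈ Icc 1 n, D t ω) := by
    ext n ω
    simp only [chernoffProcess, D, sum_add_distrib, ← mul_sum, ← sum_div]
    ring_nf
  have hDm : ∀ n, 1 ≤ n → Measurable[ℱ n] (D n) := fun n hn =>
    (((hxm n hn).div_const c).const_mul _).add (((hym n hn).div_const c).const_mul _)
  have hDB : ∀ n, 1 ≤ n → ∀ᵐ ω ∂P, D n ω ≤ Real.log (1 + ε) := fun n hn => by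
    filter_upwards [hxb n hn, hyb n hn] with ω ⟨_, hxc⟩ ⟨hy0, _⟩
    exact Real.log_one_add_mul_add_log_one_sub_mul_le hε0 hε1 ((div_le_one hc).2 hxc)
      (div_nonneg hy0 hc.le)
  have hDexp : ∀ n, 1 ≤ n → ∀ᵐ ω ∂P, Real.exp (D n ω) ≤ 1 + ε / c * (x n ω - y n ω) :=
    fun n hn => by
      filter_upwards [hxb n hn, hyb n hn] with ω ⟨hx0, hxc⟩ ⟨hy0, hyc⟩
      calc Real.exp (D n ω) ≤ 1 + ε * (x n ω / c - y n ω / c) :=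
            Real.exp_log_one_add_mul_add_log_one_sub_mul_le hε0 hε1 (by positivity)
              ((div_le_one hc).2 hxc) (by positivity) ((div_le_one hc).2 hyc)
        _ = 1 + ε / c * (x n ω - y n ω) := by ring
  have hDc : ∀ n, P[fun ω => Real.exp (D (n + 1) ω)|ℱ n] ≤ᵐ[P] 1 := fun n => by
    have hn := Nat.le_add_left 1 n
    refine condExp_le_one_of_ae_le_one_add_smul_sub (ℱ.le n) (by positivity : 0 ≤ ε / c)
      (.exp_of_ae_le ((hDm _ hn).le (ℱ.le _)).aestronglyMeasurable (hDB _ hn))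
      (.of_mem_Icc 0 c ((hxm _ hn).le (ℱ.le _)).aemeasurable (hxb _ hn))
      (.of_mem_Icc 0 c ((hym _ hn).le (ℱ.le _)).aemeasurable (hyb _ hn)) (hDexp _ hn) ?_
    exact Nat.add_sub_cancel n 1 ▸ hcond _ hn
  rw [hprocess]
  exact supermartingale_exp_sum_Icc hDm hDB hDc

end MeasureTheory

/-- Lemma B.1: stopping-time Chernoff bound. -/
theorem stmt5
    {Ω : Type*} {m0 : MeasurableSpace Ω}
    (P : Measure Ω) [IsProbabilityMeasure P]
    (ℱ : Filtration ℕ m0)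
    (c : ℝ) (hc : 0 < c)
    (x y : ℕ → Ω → ℝ)
    (hxm : ∀ n, 1 ≤ n → Measurable[ℱ n] (x n))
    (hym : ∀ n, 1 ≤ n → Measurable[ℱ n] (y n))
    (hxb : ∀ n, 1 ≤ n → ∀ᵐ ω ∂P, x n ω ∈ Set.Icc 0 c)
    (hyb : ∀ n, 1 ≤ n → ∀ᵐ ω ∂P, y n ω ∈ Set.Icc 0 c)
    (hcond : ∀ n, 1 ≤ n → ∀ᵐ ω ∂P, (P[x n|ℱ (n - 1)]) ω ≤ (P[y n|ℱ (n - 1)]) ω)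
    (ε μ : ℝ) (hε : ε ∈ Set.Ioo (0 : ℝ) 1) (hμ : 0 < μ) :
    P { ω | ∃ n, 1 ≤ n ∧
        (∑ t ∈ Finset.Icc 1 n, x t ω) / (1 + ε)
          - (∑ t ∈ Finset.Icc 1 n, y t ω) / (1 - ε) ≥ ε * μ * c } ≤
      ENNReal.ofReal (Real.exp (-(ε ^ 2 * μ))) := by
  obtain ⟨hε0, hε1⟩ := hε
  have hM := supermartingale_chernoffProcess hc hε0 hε1 hxm hym hxb hyb hcond
  have hy0 : ∀ᵐ ω ∂P, ∀ t, 1 ≤ t → 0 ≤ y t ω :=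
    (ae_ball_iff (Set.to_countable (Set.Ici 1))).2 fun t ht => (hyb t ht).mono fun _ h => h.1
  calc P {ω | ∃ n, 1 ≤ n ∧ (∑ t ∈ Icc 1 n, x t ω) / (1 + ε)
          - (∑ t ∈ Icc 1 n, y t ω) / (1 - ε) ≥ ε * μ * c}
      ≤ P {ω | ∃ n, Real.exp (ε ^ 2 * μ) ≤ chernoffProcess ε c x y n ω} := by
        refine measure_mono_ae (hy0.mono fun ω hω ⟨n, _, hn⟩ => ⟨n, Real.exp_le_exp.2 ?_⟩)
        have h := Real.mul_le_log_one_add_mul_add_log_one_sub_mul hε0 hε1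
          (sum_nonneg fun t ht => hω t (mem_Icc.1 ht).1) (by positivity) hn
        rw [le_div_iff₀ hc]
        linarith
    _ ≤ ENNReal.ofReal ((∫ ω, chernoffProcess ε c x y 0 ω ∂P) / Real.exp (ε ^ 2 * μ)) :=
        hM.measure_exists_le_le (fun n => .of_forall fun ω => (Real.exp_pos _).le)
          (Real.exp_pos _)
    _ = ENNReal.ofReal (Real.exp (-(ε ^ 2 * μ))) := by simp [Real.exp_neg]
end

section
/- Summed complementary-slackness competitive inequality: let ρ ∈ ℝ^m with ρ_j > 0 for all j, and let α ≥ 1. For each t ∈ {1,…,τ}, let X_t be a set containing a null action 0, r_t a reward function with r_t(0) = 0 and r_t(x) ≥ 0 on X_t, and g_t a consumption function with g_t(0) = 0, g_t(x) ≥ 0 componentwise on X_t, and g_t(x)_j ≤ α·ρ_j for every x ∈ X_t and every j. Let μ_t ∈ ℝ^m with μ_t ≥ 0 componentwise, let x_t ∈ X_t satisfy r_t(x_t) − μ_t·g_t(x_t) ≥ r_t(x) − μ_t·g_t(x) for every x ∈ X_t, and let x*_t ∈ X_t be arbitrary. Then α·Σ_{t=1}^{τ} r_t(x_t) ≥ Σ_{t=1}^{τ}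 r_t(x*_t) − α·Σ_{t=1}^{τ} μ_t·(ρ − g_t(x_t)). -/
open Finset

/-- Summed complementary-slackness competitive inequality. -/
theorem stmt6
    (m d τ : ℕ) (hτ : 0 < τ)
    (ρ : Fin m → ℝ) (hρ : ∀ j, 0 < ρ j)
    (α : ℝ) (hα : 1 ≤ α)
    (X : Fin τ → Set (Fin d → ℝ))
    (r : Fin τ → (Fin d → ℝ) → ℝ)
    (g : Fin τ → (Fin d → ℝ) → (Fin m → ℝ))
    (hX0 : ∀ t, (0 : Fin d → ℝ) ∈ X t)
    (hr0 : ∀ t, r t 0 = 0)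
    (hrpos : ∀ t, ∀ x ∈ X t, 0 ≤ r t x)
    (hg0 : ∀ t, g t 0 = 0)
    (hgpos : ∀ t, ∀ x ∈ X t, ∀ j, 0 ≤ g t x j)
    (hgbd : ∀ t, ∀ x ∈ X t, ∀ j, g t x j ≤ α * ρ j)
    (μ : Fin τ → Fin m → ℝ) (hμ : ∀ t j, 0 ≤ μ t j)
    (x xstar : Fin τ → (Fin d → ℝ))
    (hx : ∀ t, x t ∈ X t) (hxstar : ∀ t, xstar t ∈ X t)
    (hgreedy : ∀ t, ∀ y ∈ X t,
      r t y - ∑ j, μ t j * g t y j ≤ r t (x t) - ∑ j, μ t j * g t (x t) j) :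
    α * ∑ t, r t (x t) ≥
      (∑ t, r t (xstar t)) - α * ∑ t, ∑ j, μ t j * (ρ j - g t (x t) j) := by
  have key : ∀ t, r t (xstar t) ≤ α * r t (x t) + α * ∑ j, μ t j * (ρ j - g t (x t) j) := by
    intro t
    have h1 := hgreedy t (xstar t) (hxstar t)
    have h0 := hgreedy t 0 (hX0 t)
    rw [hr0, hg0] at h0
    simp only [Pi.zero_apply, mul_zero, Finset.sum_const_zero, zero_sub, neg_zero] at h0
    have h2 : ∑ j, μ t j * g t (xstar t) j ≤ α * ∑ j, μ t j * ρ j := by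
      rw [Finset.mul_sum]
      refine Finset.sum_le_sum fun j _ => ?_
      have hb := hgbd t (xstar t) (hxstar t) j
      have hm := hμ t j
      nlinarith
    have h3 : ∑ j, μ t j * (ρ j - g t (x t) j)
        = (∑ j, μ t j * ρ j) - ∑ j, μ t j * g t (x t) j := by
      rw [← Finset.sum_sub_distrib]
      exact Finset.sum_congr rfl fun j _ => by ring
    have h4 : 0 ≤ ∑ j, μ t j * g t (x t) j :=
      Finset.sum_nonneg fun j _ => mul_nonneg (hμ t j) (hgpos t _ (hx t) j)
    nlinarith [hrpos t (x t) (hx t)]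
  have hsum := Finset.sum_le_sum (fun t (_ : t ∈ Finset.univ) => key t)
  rw [Finset.sum_add_distrib, ← Finset.mul_sum, ← Finset.mul_sum] at hsum
  linarith
end

section
/- Concavity of the (d+1)-point concavification: let X ⊆ ℝ^d be nonempty and let r : X → ℝ be bounded above. For x̃ in the convex hull of X define r̃(x̃) = sup{ Σ_{k=1}^{d+1} α_k·r(x_k) : x_1,…,x_{d+1} ∈ X, α_1,…,α_{d+1} ≥ 0, Σ_{k=1}^{d+1} α_k = 1, Σ_{k=1}^{d+1} α_k·x_k = x̃ }. Then r̃ is concave on the convex hull of X: for all x̃, ỹ in the convex hull of X and all λ ∈ [0,1], r̃(λ·x̃ + (1−λ)·ỹ) ≥ λ·r̃(x̃) + (1−λ)·r̃(ỹ). -/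
/-!
Represent a point of the convex hull by a convex combination with weights `a` and points `p`.
If more than `d + 1` points are used, they are affinely dependent; a relation `c`, signed so
that `∑ c k * r (p k) ≤ 0`, lets one slide to `a - t c` until some weight vanishes. This keeps
the barycenter and does not decrease the value `∑ a k * r (p k)`, so every convex combination
is dominated by a `(d + 1)`-point one (a Carathéodory theorem with values). Concavity follows:
concatenating near-optimal representations of `x̃` and `ỹ` with weights `λ` and `1 - λ` gives a
representation of `λ x̃ + (1 - λ) ỹ` of value `λ u + (1 - λ) v`, which is then reduced back to
`d + 1` points.
-/

open Finset

section

variable {V : Type*} [AddCommGroup V] [Module ℝ V] {X : Set V} {r : V → ℝ}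

/-- The concavification of the theorem is `r̃ z = sSup (convexCombValues X r (Fin (d + 1)) z)`. -/
def convexCombValues (X : Set V) (r : V → ℝ) (ι : Type*) [Fintype ι] (z : V) : Set ℝ :=
  { v | ∃ (p : ι → V) (a : ι → ℝ), (∀ k, p k ∈ X) ∧ (∀ k, 0 ≤ a k) ∧ (∑ k, a k) = 1 ∧
      (∑ k, a k • p k) = z ∧ v = ∑ k, a k * r (p k) }

variable {ι κ : Type*} [Fintype ι] [Fintype κ]

lemma sum_mul_mem_convexCombValues {p : ι → V} {a : ι → ℝ} (hp : ∀ k, p k ∈ X)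
    (ha : ∀ k, 0 ≤ a k) (ha₁ : ∑ k, a k = 1) :
    ∑ k, a k * r (p k) ∈ convexCombValues X r ι (∑ k, a k • p k) :=
  ⟨p, a, hp, ha, ha₁, rfl, rfl⟩

lemma bddAbove_convexCombValues {M : ℝ} (hM : ∀ x ∈ X, r x ≤ M) (z : V) :
    BddAbove (convexCombValues X r ι z) := by
  refine ⟨M, ?_⟩
  rintro _ ⟨p, a, hp, ha, ha₁, -, rfl⟩
  calc ∑ k, a k * r (p k) ≤ ∑ k, a k * M :=
        sum_le_sum fun k _ => mul_le_mul_of_nonneg_left (hM _ (hp k)) (ha k)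
    _ = M := by rw [← sum_mul, ha₁, one_mul]

lemma convexCombValues_subset_of_embedding (hX : X.Nonempty) (f : ι ↪ κ) (z : V) :
    convexCombValues X r ι z ⊆ convexCombValues X r κ z := by
  obtain ⟨x₀, hx₀⟩ := hX
  rintro _ ⟨p, a, hp, ha, ha₁, rfl, rfl⟩
  set q := Function.extend f p fun _ => x₀
  set b := Function.extend f a 0
  have hq : ∀ i, q (f i) = p i := f.injective.extend_apply _ _
  have hb : ∀ i, b (f i) = a i := f.injective.extend_apply _ _
  have hq₀ : ∀ k ∉ Set.range f, q k = x₀ := fun k hk => Function.extend_apply' _ _ _ hk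
  have hb₀ : ∀ k ∉ Set.range f, b k = 0 := fun k hk => Function.extend_apply' _ _ _ hk
  refine ⟨q, b, fun k => ?_, fun k => ?_, ?_, ?_, ?_⟩
  · by_cases hk : k ∈ Set.range f
    · obtain ⟨i, rfl⟩ := hk
      exact hq i ▸ hp i
    · exact hq₀ k hk ▸ hx₀
  · by_cases hk : k ∈ Set.range f
    · obtain ⟨i, rfl⟩ := hk
      exact hb i ▸ ha i
    · exact (hb₀ k hk).ge
  · rw [← ha₁]
    exact (Fintype.sum_of_injective f f.injective _ _ hb₀ fun i => (hb i).symm).symm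
  · exact (Fintype.sum_of_injective f f.injective _ _
      (fun k hk => by rw [hb₀ k hk, zero_smul]) fun i => by rw [hb, hq]).symm
  · exact Fintype.sum_of_injective f f.injective _ _
      (fun k hk => by rw [hb₀ k hk, zero_mul]) fun i => by rw [hb, hq]

lemma sum_mul_mem_convexCombValues_subtype_ne [DecidableEq ι] {p : ι → V} {a : ι → ℝ}
    (hp : ∀ k, p k ∈ X) (ha : ∀ k, 0 ≤ a k) (ha₁ : ∑ k, a k = 1) {j : ι} (hj : a j = 0) :
    ∑ k, a k * r (p k) ∈ convexCombValues X r {k // k ≠ j} (∑ k, a k • p k) := by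
  rw [Fintype.sum_eq_add_sum_subtype_ne _ j, Fintype.sum_eq_add_sum_subtype_ne _ j, hj,
    zero_mul, zero_smul, zero_add, zero_add]
  rw [Fintype.sum_eq_add_sum_subtype_ne _ j, hj, zero_add] at ha₁
  exact sum_mul_mem_convexCombValues (fun k => hp k) (fun k => ha k) ha₁

lemma add_mem_convexCombValues {x y : V} {u v α β : ℝ} (hu : u ∈ convexCombValues X r ι x)
    (hv : v ∈ convexCombValues X r κ y) (hα : 0 ≤ α) (hβ : 0 ≤ β) (hαβ : α + β = 1) :
    α * u + β * v ∈ convexCombValues X r (ι ⊕ κ) (α • x + β • y) := by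
  obtain ⟨p, a, hp, ha, ha₁, rfl, rfl⟩ := hu
  obtain ⟨q, b, hq, hb, hb₁, rfl, rfl⟩ := hv
  refine ⟨Sum.elim p q, Sum.elim (α * a ·) (β * b ·), ?_, ?_, ?_, ?_, ?_⟩
  · rintro (k | k)
    exacts [hp k, hq k]
  · rintro (k | k)
    exacts [mul_nonneg hα (ha k), mul_nonneg hβ (hb k)]
  · simp only [Fintype.sum_sum_type, Sum.elim_inl, Sum.elim_inr, ← mul_sum, ha₁, hb₁, hαβ,
      mul_one]
  · simp only [Fintype.sum_sum_type, Sum.elim_inl, Sum.elim_inr, mul_smul, smul_sum]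
  · simp only [Fintype.sum_sum_type, Sum.elim_inl, Sum.elim_inr, mul_assoc, mul_sum]

lemma exists_affine_relation_of_finrank_succ_lt_card [FiniteDimensional ℝ V] (p : ι → V)
    (hι : Module.finrank ℝ V + 1 < Fintype.card ι) :
    ∃ c : ι → ℝ, ∑ i, c i = 0 ∧ ∑ i, c i • p i = 0 ∧ c ≠ 0 := by
  have hp : ¬AffineIndependent ℝ p := fun hp =>
    (hp.card_le_finrank_succ.trans (by gcongr; exact Submodule.finrank_le _)).not_gt hι
  rw [affineIndependent_iff_of_fintype] at hp
  push Not at hp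
  obtain ⟨c, hc, hcp, i, hi⟩ := hp
  exact ⟨c, hc, by rwa [weightedVSub_eq_linear_combination _ hc] at hcp,
    fun h => hi (congrFun h i)⟩

lemma exists_nonneg_sub_mul_eq_zero {a c : ι → ℝ} (ha : ∀ i, 0 ≤ a i) (hc : ∃ i, 0 < c i) :
    ∃ t, 0 ≤ t ∧ (∀ i, 0 ≤ a i - t * c i) ∧ ∃ j, a j - t * c j = 0 := by
  classical
  obtain ⟨j, hj, hmin⟩ := ({i | 0 < c i} : Finset ι).exists_min_image (fun i => a i / c i)
    (by simpa [Finset.Nonempty] using hc)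
  have hcj : 0 < c j := (mem_filter.1 hj).2
  have ht : 0 ≤ a j / c j := div_nonneg (ha j) hcj.le
  refine ⟨a j / c j, ht, fun i => ?_, j, by rw [div_mul_cancel₀ _ hcj.ne', sub_self]⟩
  rcases lt_or_ge 0 (c i) with hci | hci
  · rw [sub_nonneg, ← le_div_iff₀ hci]
    exact hmin i (by simpa using hci)
  · nlinarith [ha i]

lemma exists_mem_convexCombValues_subtype_ne_ge [FiniteDimensional ℝ V] [DecidableEq ι]
    (hι : Module.finrank ℝ V + 1 < Fintype.card ι) {z : V} {v : ℝ}
    (hv : v ∈ convexCombValues X r ι z) :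
    ∃ j : ι, ∃ w ∈ convexCombValues X r {i // i ≠ j} z, v ≤ w := by
  obtain ⟨p, a, hp, ha, ha₁, rfl, rfl⟩ := hv
  obtain ⟨c, hc₀, hcp, hc_ne, hcr⟩ : ∃ c : ι → ℝ, ∑ i, c i = 0 ∧ ∑ i, c i • p i = 0 ∧
      c ≠ 0 ∧ ∑ i, c i * r (p i) ≤ 0 := by
    obtain ⟨c, hc₀, hcp, hc_ne⟩ := exists_affine_relation_of_finrank_succ_lt_card p hι
    rcases le_total (∑ i, c i * r (p i)) 0 with h | h
    · exact ⟨c, hc₀, hcp, hc_ne, h⟩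
    · exact ⟨-c, by simp [hc₀], by simp [hcp], neg_ne_zero.2 hc_ne, by simpa using h⟩
  have hc_pos : ∃ i, 0 < c i := by
    by_contra! h
    exact hc_ne ((Fintype.sum_eq_zero_iff_of_nonpos h).1 hc₀)
  obtain ⟨t, ht, ha', j, hj⟩ := exists_nonneg_sub_mul_eq_zero ha hc_pos
  have hsum : ∑ i, (a i - t * c i) = 1 := by
    rw [sum_sub_distrib, ← mul_sum, hc₀, ha₁, mul_zero, sub_zero]
  have hbary : ∑ i, (a i - t * c i) • p i = ∑ i, a i • p i := by
    simp only [sub_smul, mul_smul, sum_sub_distrib, ← smul_sum, hcp, smul_zero, sub_zero]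
  have hval : ∑ i, a i * r (p i) ≤ ∑ i, (a i - t * c i) * r (p i) := by
    simp only [sub_mul, mul_assoc, sum_sub_distrib, ← mul_sum]
    nlinarith
  exact ⟨j, _, hbary ▸ sum_mul_mem_convexCombValues_subtype_ne hp ha' hsum hj, hval⟩

theorem exists_mem_convexCombValues_ge [FiniteDimensional ℝ V] (hX : X.Nonempty)
    (hκ : Module.finrank ℝ V + 1 ≤ Fintype.card κ) {z : V} {v : ℝ}
    (hv : v ∈ convexCombValues X r ι z) : ∃ w ∈ convexCombValues X r κ z, v ≤ w := by
  induction h : Fintype.card ι using Nat.strong_induction_on generalizing ι v with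
  | _ n ih =>
  classical
  by_cases hικ : Fintype.card ι ≤ Fintype.card κ
  · obtain ⟨f⟩ := Function.Embedding.nonempty_of_card_le hικ
    exact ⟨v, convexCombValues_subset_of_embedding hX f z hv, le_rfl⟩
  · obtain ⟨j, w, hw, hvw⟩ := exists_mem_convexCombValues_subtype_ne_ge (by omega) hv
    obtain ⟨w', hw', hww'⟩ := ih _ (by simp; omega) hw rfl
    exact ⟨w', hw', hvw.trans hww'⟩

lemma convexCombValues_nonempty [FiniteDimensional ℝ V] (hX : X.Nonempty)
    (hκ : Module.finrank ℝ V + 1 ≤ Fintype.card κ) {z : V} (hz : z ∈ convexHull ℝ X) :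
    (convexCombValues X r κ z).Nonempty := by
  obtain ⟨ι, _, p, a, hpX, -, ha, ha₁, rfl⟩ := eq_pos_convex_span_of_mem_convexHull hz
  obtain ⟨w, hw, -⟩ := exists_mem_convexCombValues_ge hX hκ
    (sum_mul_mem_convexCombValues (r := r) (fun i => hpX ⟨i, rfl⟩) (fun i => (ha i).le) ha₁)
  exact ⟨w, hw⟩

end

lemma mul_csSup_add_mul_csSup_le {S T U : Set ℝ} (hS : S.Nonempty) (hS' : BddAbove S)
    (hT : T.Nonempty) (hT' : BddAbove T) (hU : BddAbove U) {α β : ℝ} (hα : 0 ≤ α) (hβ : 0 ≤ β)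
    (h : ∀ u ∈ S, ∀ v ∈ T, ∃ w ∈ U, α * u + β * v ≤ w) :
    α * sSup S + β * sSup T ≤ sSup U := by
  rw [← smul_eq_mul, ← smul_eq_mul, ← Real.sSup_smul_of_nonneg hα, ← Real.sSup_smul_of_nonneg hβ,
    ← csSup_add (hS.smul_set) (hS'.smul_of_nonneg hα) (hT.smul_set) (hT'.smul_of_nonneg hβ)]
  refine csSup_le (hS.smul_set.add hT.smul_set) ?_
  rintro _ ⟨_, ⟨u, hu, rfl⟩, _, ⟨v, hv, rfl⟩, rfl⟩
  obtain ⟨w, hw, hle⟩ := h u hu v hv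
  exact hle.trans (le_csSup hU hw)

/-- Concavity of the (d+1)-point concavification. -/
theorem stmt13
    (d : ℕ) (X : Set (Fin d → ℝ)) (hXne : X.Nonempty)
    (r : (Fin d → ℝ) → ℝ)
    (M : ℝ) (hM : ∀ x ∈ X, r x ≤ M)
    (rt : (Fin d → ℝ) → ℝ)
    (hrt : ∀ z ∈ convexHull ℝ X, rt z =
      sSup { v | ∃ (p : Fin (d + 1) → Fin d → ℝ) (a : Fin (d + 1) → ℝ),
        (∀ k, p k ∈ X) ∧ (∀ k, 0 ≤ a k) ∧ (∑ k, a k) = 1 ∧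
        (∑ k, a k • p k) = z ∧ v = ∑ k, a k * r (p k) }) :
    ∀ xt ∈ convexHull ℝ X, ∀ yt ∈ convexHull ℝ X, ∀ l ∈ Set.Icc (0 : ℝ) 1,
      l * rt xt + (1 - l) * rt yt ≤ rt (l • xt + (1 - l) • yt) := by
  intro xt hxt yt hyt l ⟨hl₀, hl₁⟩
  have hl₁' : 0 ≤ 1 - l := sub_nonneg.2 hl₁
  have hz := convex_convexHull ℝ X hxt hyt hl₀ hl₁' (add_sub_cancel l 1)
  have hd : Module.finrank ℝ (Fin d → ℝ) + 1 ≤ Fintype.card (Fin (d + 1)) := by simp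
  rw [hrt xt hxt, hrt yt hyt, hrt _ hz]
  exact mul_csSup_add_mul_csSup_le (convexCombValues_nonempty hXne hd hxt)
    (bddAbove_convexCombValues hM xt) (convexCombValues_nonempty hXne hd hyt)
    (bddAbove_convexCombValues hM yt) (bddAbove_convexCombValues hM _) hl₀ hl₁'
    fun u hu v hv => exists_mem_convexCombValues_ge hXne hd
      (add_mem_convexCombValues hu hv hl₀ hl₁' (add_sub_cancel l 1))
end

section
/- Expected weak duality with horizon truncation: in the stochastic online resource allocation model, for every μ ∈ ℝ^m with μ ≥ 0 componentwise and every real τ ∈ [0, T]: E[ OPT(γ⃗) ] ≤ τ·D̄(μ | P) + (T − τ)·r̄. -/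
/-!
The Lagrangian bound `r_t(x_t) ≤ r*(μ)(γ_t) + μ·g_t(x_t)`, summed over a feasible plan and combined
with the budget constraint, gives `OPT ≤ Σ_t r*(μ)(γ_t) + T μ·ρ`, whose expectation is `T·D̄(μ | P)`;
trivially also `OPT ≤ T r̄`. The claimed bound is the convex combination of these two bounds with
weights `τ/T` and `1 - τ/T`.
-/

open MeasureTheory Finset

section OfflineProblem

variable {S D ι n : Type*} [Fintype n]
  (X : S → Set D) (r : S → D → ℝ) (g : S → D → ι → ℝ)

/-- The paper's `OPT` is the supremum of this set for `B = Tρ`. -/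
def offlineValues (B : ι → ℝ) (γ : n → S) : Set ℝ :=
  { v | ∃ x : n → D, (∀ t, x t ∈ X (γ t)) ∧ (∀ j, ∑ t, g (γ t) (x t) j ≤ B j) ∧
    v = ∑ t, r (γ t) (x t) }

/-- The paper's `r*(μ)`. -/
noncomputable def conjugateReward [Fintype ι] (μ : ι → ℝ) (s : S) : ℝ :=
  sSup { v | ∃ x ∈ X s, v = r s x - ∑ j, μ j * g s x j }

variable {X r g}

theorem offlineValues_nonempty [Zero D] (hX0 : ∀ s, (0 : D) ∈ X s) (hg0 : ∀ s, g s 0 = 0)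
    {B : ι → ℝ} (hB : 0 ≤ B) (γ : n → S) : (offlineValues X r g B γ).Nonempty :=
  ⟨_, fun _ ↦ 0, fun t ↦ hX0 (γ t), fun j ↦ by simpa [hg0] using hB j, rfl⟩

theorem le_conjugateReward [Fintype ι] {rbar : ℝ} (hrbd : ∀ s, ∀ x ∈ X s, r s x ≤ rbar)
    (hgpos : ∀ s, ∀ x ∈ X s, ∀ j, 0 ≤ g s x j) {μ : ι → ℝ} (hμ : 0 ≤ μ)
    {s : S} {x : D} (hx : x ∈ X s) :
    r s x - ∑ j, μ j * g s x j ≤ conjugateReward X r g μ s := by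
  refine le_csSup ⟨rbar, ?_⟩ ⟨x, hx, rfl⟩
  rintro v ⟨y, hy, rfl⟩
  have : 0 ≤ ∑ j, μ j * g s y j := sum_nonneg fun j _ ↦ mul_nonneg (hμ j) (hgpos s y hy j)
  linarith [hrbd s y hy]

theorem sSup_offlineValues_le_sum_conjugateReward [Fintype ι] [Zero D] (hX0 : ∀ s, (0 : D) ∈ X s)
    (hg0 : ∀ s, g s 0 = 0) {rbar : ℝ} (hrbd : ∀ s, ∀ x ∈ X s, r s x ≤ rbar)
    (hgpos : ∀ s, ∀ x ∈ X s, ∀ j, 0 ≤ g s x j) {μ : ι → ℝ} (hμ : 0 ≤ μ)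
    {B : ι → ℝ} (hB : 0 ≤ B) (γ : n → S) :
    sSup (offlineValues X r g B γ) ≤ ∑ t, conjugateReward X r g μ (γ t) + ∑ j, μ j * B j := by
  refine csSup_le (offlineValues_nonempty hX0 hg0 hB γ) ?_
  rintro v ⟨x, hx, hbudget, rfl⟩
  calc ∑ t, r (γ t) (x t)
      ≤ ∑ t, (conjugateReward X r g μ (γ t) + ∑ j, μ j * g (γ t) (x t) j) :=
        sum_le_sum fun t _ ↦ by linarith [le_conjugateReward hrbd hgpos hμ (hx t)]
    _ = ∑ t, conjugateReward X r g μ (γ t) + ∑ j, μ j * ∑ t, g (γ t) (x t) j := by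
        simp only [sum_add_distrib, mul_sum]
        rw [sum_comm]
    _ ≤ ∑ t, conjugateReward X r g μ (γ t) + ∑ j, μ j * B j := by
        gcongr with j
        exacts [hμ j, hbudget j]

theorem sSup_offlineValues_le_card_mul [Zero D] (hX0 : ∀ s, (0 : D) ∈ X s)
    (hg0 : ∀ s, g s 0 = 0) {rbar : ℝ} (hrbd : ∀ s, ∀ x ∈ X s, r s x ≤ rbar)
    {B : ι → ℝ} (hB : 0 ≤ B) (γ : n → S) :
    sSup (offlineValues X r g B γ) ≤ Fintype.card n * rbar := by
  refine csSup_le (offlineValues_nonempty hX0 hg0 hB γ) ?_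
  rintro v ⟨x, hx, -, rfl⟩
  calc ∑ t, r (γ t) (x t) ≤ ∑ _t : n, rbar := sum_le_sum fun t _ ↦ hrbd _ _ (hx t)
    _ = Fintype.card n * rbar := by simp

end OfflineProblem

theorem integral_sum_comp_of_map_eq {Ω S n : Type*} [MeasurableSpace Ω] [MeasurableSpace S]
    [Fintype n] {P : Measure Ω} {Q : Measure S} {γ : n → Ω → S} (hγ : ∀ t, Measurable (γ t))
    (hlaw : ∀ t, P.map (γ t) = Q) {f : S → ℝ} (hf : Integrable f Q) :
    Integrable (fun ω ↦ ∑ t, f (γ t ω)) P ∧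
      ∫ ω, ∑ t, f (γ t ω) ∂P = Fintype.card n * ∫ s, f s ∂Q := by
  have hint : ∀ t, Integrable (fun ω ↦ f (γ t ω)) P := fun t ↦
    ((hlaw t).symm ▸ hf).comp_measurable (hγ t)
  refine ⟨integrable_finsetSum _ fun t _ ↦ hint t, ?_⟩
  rw [integral_finsetSum _ fun t _ ↦ hint t]
  have hsame : ∀ t, ∫ ω, f (γ t ω) ∂P = ∫ s, f s ∂Q := fun t ↦ by
    rw [← hlaw t, integral_map (hγ t).aemeasurable (hlaw t ▸ hf.aestronglyMeasurable)]
  simp [hsame]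

theorem le_mul_add_sub_mul_of_le_mul {a b c T τ : ℝ} (hb : a ≤ T * b) (hc : a ≤ T * c)
    (hτ0 : 0 ≤ τ) (hτT : τ ≤ T) : a ≤ τ * b + (T - τ) * c := by
  rcases (hτ0.trans hτT).eq_or_lt with rfl | hT
  · obtain rfl : τ = 0 := le_antisymm hτT hτ0
    simpa using hc
  refine le_of_mul_le_mul_left ?_ hT
  nlinarith [mul_le_mul_of_nonneg_left hb hτ0, mul_le_mul_of_nonneg_left hc (sub_nonneg.2 hτT)]

theorem stmt14_general
    {Ω S : Type*} [MeasurableSpace Ω] [MeasurableSpace S]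
    (P : Measure Ω) [IsProbabilityMeasure P]
    (T m d : ℕ)
    (ρ : Fin m → ℝ) (hρ : ∀ j, 0 < ρ j)
    (rbar : ℝ)
    (X : S → Set (Fin d → ℝ))
    (r : S → (Fin d → ℝ) → ℝ)
    (g : S → (Fin d → ℝ) → (Fin m → ℝ))
    (hX0 : ∀ s, (0 : Fin d → ℝ) ∈ X s)
    (hrbd : ∀ s, ∀ x ∈ X s, r s x ≤ rbar)
    (hg0 : ∀ s, g s 0 = 0)
    (hgpos : ∀ s, ∀ x ∈ X s, ∀ j, 0 ≤ g s x j)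
    (γ : Fin T → Ω → S) (hγmeas : ∀ t, Measurable (γ t))
    (Pdist : Measure S)
    (hlaw : ∀ t, Measure.map (γ t) P = Pdist)
    (OPT : Ω → ℝ)
    (hOPT : ∀ ω, OPT ω = sSup { v | ∃ x : Fin T → (Fin d → ℝ),
      (∀ t, x t ∈ X (γ t ω)) ∧ (∀ j, ∑ t, g (γ t ω) (x t) j ≤ (T : ℝ) * ρ j) ∧
      v = ∑ t, r (γ t ω) (x t) })
    (hOPTint : Integrable OPT P)
    (μ : Fin m → ℝ) (hμ : ∀ j, 0 ≤ μ j)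
    (rstar : S → ℝ)
    (hrstar : ∀ s, rstar s = sSup { v | ∃ x ∈ X s, v = r s x - ∑ j, μ j * g s x j })
    (hrstarint : Integrable rstar Pdist)
    (Dbar : ℝ) (hDbar : Dbar = (∫ s, rstar s ∂Pdist) + ∑ j, μ j * ρ j)
    (τ : ℝ) (hτ : τ ∈ Set.Icc (0 : ℝ) T) :
    ∫ ω, OPT ω ∂P ≤ τ * Dbar + ((T : ℝ) - τ) * rbar := by
  have hB : 0 ≤ fun j ↦ (T : ℝ) * ρ j := fun j ↦ mul_nonneg T.cast_nonneg (hρ j).le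
  have hrstar_eq : rstar = conjugateReward X r g μ := funext hrstar
  have hOPT_dual : ∀ ω, OPT ω ≤ ∑ t, rstar (γ t ω) + ∑ j, μ j * (T * ρ j) := fun ω ↦ by
    rw [hOPT ω, hrstar_eq]
    exact sSup_offlineValues_le_sum_conjugateReward hX0 hg0 hrbd hgpos hμ hB (γ · ω)
  have hOPT_cap : ∀ ω, OPT ω ≤ T * rbar := fun ω ↦ by
    rw [hOPT ω]
    exact (sSup_offlineValues_le_card_mul hX0 hg0 hrbd hB (γ · ω)).trans_eq (by simp)
  obtain ⟨hsum_int, hsum_eq⟩ := integral_sum_comp_of_map_eq hγmeas hlaw hrstarint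
  have hdual : ∫ ω, OPT ω ∂P ≤ T * Dbar := by
    calc ∫ ω, OPT ω ∂P ≤ ∫ ω, (∑ t, rstar (γ t ω) + ∑ j, μ j * (T * ρ j)) ∂P :=
          integral_mono hOPTint (hsum_int.add (integrable_const _)) hOPT_dual
      _ = T * Dbar := by
          rw [integral_add hsum_int (integrable_const _), hsum_eq, hDbar]
          simp [mul_add, mul_sum, mul_left_comm]
  have hcap : ∫ ω, OPT ω ∂P ≤ T * rbar := by
    calc ∫ ω, OPT ω ∂P ≤ ∫ _ω, (T * rbar : ℝ) ∂P :=
          integral_mono hOPTint (integrable_const _) hOPT_cap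
      _ = T * rbar := by simp
  exact le_mul_add_sub_mul_of_le_mul hdual hcap hτ.1 hτ.2

/-- Expected weak duality with horizon truncation. -/
theorem stmt14
    {Ω S : Type*} [MeasurableSpace Ω] [MeasurableSpace S]
    (P : Measure Ω) [IsProbabilityMeasure P]
    (T m d : ℕ) (hT : 0 < T) (hm : 0 < m)
    (ρ : Fin m → ℝ) (hρ : ∀ j, 0 < ρ j)
    (rbar : ℝ) (hrbar : 0 ≤ rbar)
    (X : S → Set (Fin d → ℝ))
    (r : S → (Fin d → ℝ) → ℝ)
    (g : S → (Fin d → ℝ) → (Fin m → ℝ))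
    (hX0 : ∀ s, (0 : Fin d → ℝ) ∈ X s)
    (hr0 : ∀ s, r s 0 = 0)
    (hrpos : ∀ s, ∀ x ∈ X s, 0 ≤ r s x)
    (hrbd : ∀ s, ∀ x ∈ X s, r s x ≤ rbar)
    (hg0 : ∀ s, g s 0 = 0)
    (hgpos : ∀ s, ∀ x ∈ X s, ∀ j, 0 ≤ g s x j)
    (γ : Fin T → Ω → S) (hγmeas : ∀ t, Measurable (γ t))
    (Pdist : Measure S) [IsProbabilityMeasure Pdist]
    (hlaw : ∀ t, Measure.map (γ t) P = Pdist)
    (hindep : ProbabilityTheory.iIndepFun γ P)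
    (OPT : Ω → ℝ)
    (hOPT : ∀ ω, OPT ω = sSup { v | ∃ x : Fin T → (Fin d → ℝ),
      (∀ t, x t ∈ X (γ t ω)) ∧ (∀ j, ∑ t, g (γ t ω) (x t) j ≤ (T : ℝ) * ρ j) ∧
      v = ∑ t, r (γ t ω) (x t) })
    (hOPTint : Integrable OPT P)
    (μ : Fin m → ℝ) (hμ : ∀ j, 0 ≤ μ j)
    (rstar : S → ℝ)
    (hrstar : ∀ s, rstar s = sSup { v | ∃ x ∈ X s, v = r s x - ∑ j, μ j * g s x j })
    (hrstarint : Integrable rstar Pdist)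
    (Dbar : ℝ) (hDbar : Dbar = (∫ s, rstar s ∂Pdist) + ∑ j, μ j * ρ j)
    (τ : ℝ) (hτ : τ ∈ Set.Icc (0 : ℝ) T) :
    ∫ ω, OPT ω ∂P ≤ τ * Dbar + ((T : ℝ) - τ) * rbar :=
  stmt14_general P T m d ρ hρ rbar X r g hX0 hrbd hg0 hgpos γ hγmeas Pdist hlaw OPT hOPT hOPTint μ
    hμ rstar hrstar hrstarint Dbar hDbar τ hτ
end

section
/- Upper-tail concentration of the offline optimum via weak duality and Hoeffding's inequality: in the stochastic online resource allocation model, for every fixed μ ∈ ℝ^m with μ ≥ 0 componentwise and every y > 0: P( OPT(γ⃗) − T·D̄(μ | P) > y ) ≤ exp( −2y² / (r̄²·T) ). -/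
/-!
Weak duality: for any feasible allocation, adding the nonnegative slack `μ · (Tρ - Σₜ gₜ(xₜ))`
to its reward and maximising each period separately gives
`OPT ≤ Σₜ r*(μ)(γₜ) + T μ·ρ`, so `OPT - T D̄(μ | P)` is dominated by the centred sum
`Σₜ (r*(μ)(γₜ) - E r*(μ))`. Its summands are independent and take values in `[0, r̄]`, so
Hoeffding's inequality bounds the probability that this sum exceeds `y` by
`exp (-2y² / (T r̄²))`.
-/

open MeasureTheory Finset ProbabilityTheory

section LagrangianValues

variable {E ι : Type*} [Fintype ι]

def lagrangianValues (X : Set E) (r : E → ℝ) (g : E → ι → ℝ) (μ : ι → ℝ) : Set ℝ :=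
  {v | ∃ x ∈ X, v = r x - ∑ j, μ j * g x j}

variable {X : Set E} {r : E → ℝ} {g : E → ι → ℝ} {μ : ι → ℝ}

lemma zero_mem_lagrangianValues [Zero E] (hX0 : 0 ∈ X) (hr0 : r 0 = 0) (hg0 : g 0 = 0) :
    0 ∈ lagrangianValues X r g μ :=
  ⟨0, hX0, by simp [hr0, hg0]⟩

lemma mem_upperBounds_lagrangianValues {rbar : ℝ} (hrbd : ∀ x ∈ X, r x ≤ rbar)
    (hgpos : ∀ x ∈ X, ∀ j, 0 ≤ g x j) (hμ : ∀ j, 0 ≤ μ j) :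
    rbar ∈ upperBounds (lagrangianValues X r g μ) := by
  rintro v ⟨x, hx, rfl⟩
  have : 0 ≤ ∑ j, μ j * g x j := sum_nonneg fun j _ ↦ mul_nonneg (hμ j) (hgpos x hx j)
  linarith [hrbd x hx]

lemma bddAbove_lagrangianValues {rbar : ℝ} (hrbd : ∀ x ∈ X, r x ≤ rbar)
    (hgpos : ∀ x ∈ X, ∀ j, 0 ≤ g x j) (hμ : ∀ j, 0 ≤ μ j) :
    BddAbove (lagrangianValues X r g μ) :=
  ⟨rbar, mem_upperBounds_lagrangianValues hrbd hgpos hμ⟩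

lemma sSup_lagrangianValues_mem_Icc [Zero E] {rbar : ℝ} (hX0 : 0 ∈ X) (hr0 : r 0 = 0)
    (hg0 : g 0 = 0) (hrbd : ∀ x ∈ X, r x ≤ rbar) (hgpos : ∀ x ∈ X, ∀ j, 0 ≤ g x j)
    (hμ : ∀ j, 0 ≤ μ j) : sSup (lagrangianValues X r g μ) ∈ Set.Icc 0 rbar :=
  ⟨le_csSup (bddAbove_lagrangianValues hrbd hgpos hμ) (zero_mem_lagrangianValues hX0 hr0 hg0),
    csSup_le ⟨0, zero_mem_lagrangianValues hX0 hr0 hg0⟩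
      (mem_upperBounds_lagrangianValues hrbd hgpos hμ)⟩

lemma le_sSup_lagrangianValues_add (hbdd : BddAbove (lagrangianValues X r g μ)) {x : E}
    (hx : x ∈ X) : r x ≤ sSup (lagrangianValues X r g μ) + ∑ j, μ j * g x j := by
  linarith [le_csSup hbdd ⟨x, hx, rfl⟩]

end LagrangianValues

section WeakDuality

variable {E ι τ : Type*} [Fintype ι] [Fintype τ] {X : τ → Set E} {r : τ → E → ℝ}
  {g : τ → E → ι → ℝ} {μ : ι → ℝ}

lemma sum_le_sum_sSup_lagrangianValues_add (hμ : ∀ j, 0 ≤ μ j)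
    (hbdd : ∀ t, BddAbove (lagrangianValues (X t) (r t) (g t) μ)) {b : ι → ℝ} {x : τ → E}
    (hx : ∀ t, x t ∈ X t) (hb : ∀ j, ∑ t, g t (x t) j ≤ b j) :
    ∑ t, r t (x t) ≤ ∑ t, sSup (lagrangianValues (X t) (r t) (g t) μ) + ∑ j, μ j * b j :=
  calc ∑ t, r t (x t)
      ≤ ∑ t, (sSup (lagrangianValues (X t) (r t) (g t) μ) + ∑ j, μ j * g t (x t) j) :=
        sum_le_sum fun t _ ↦ le_sSup_lagrangianValues_add (hbdd t) (hx t)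
    _ = ∑ t, sSup (lagrangianValues (X t) (r t) (g t) μ) + ∑ j, μ j * ∑ t, g t (x t) j := by
        simp_rw [sum_add_distrib, mul_sum]
        rw [sum_comm]
    _ ≤ _ := by gcongr with j; exacts [hμ j, hb j]

def feasibleRewards (X : τ → Set E) (r : τ → E → ℝ) (g : τ → E → ι → ℝ) (b : ι → ℝ) :
    Set ℝ :=
  {v | ∃ x : τ → E, (∀ t, x t ∈ X t) ∧ (∀ j, ∑ t, g t (x t) j ≤ b j) ∧ v = ∑ t, r t (x t)}

lemma sSup_feasibleRewards_le (hμ : ∀ j, 0 ≤ μ j)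
    (hbdd : ∀ t, BddAbove (lagrangianValues (X t) (r t) (g t) μ))
    (hnonneg : ∀ t, 0 ≤ sSup (lagrangianValues (X t) (r t) (g t) μ)) {b : ι → ℝ}
    (hb : 0 ≤ ∑ j, μ j * b j) :
    sSup (feasibleRewards X r g b) ≤
      ∑ t, sSup (lagrangianValues (X t) (r t) (g t) μ) + ∑ j, μ j * b j := by
  refine Real.sSup_le ?_ (add_nonneg (sum_nonneg fun t _ ↦ hnonneg t) hb)
  rintro v ⟨x, hx, hxb, rfl⟩
  exact sum_le_sum_sSup_lagrangianValues_add hμ hbdd hx hxb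

end WeakDuality

lemma measureReal_sum_comp_sub_integral_ge_le {Ω S τ : Type*} [MeasurableSpace Ω]
    [MeasurableSpace S] [Fintype τ] {P : Measure Ω} [IsProbabilityMeasure P] {ν : Measure S}
    {γ : τ → Ω → S} (hγ : ∀ t, Measurable (γ t)) (hlaw : ∀ t, P.map (γ t) = ν)
    (hindep : iIndepFun γ P) {f : S → ℝ} (hf : Measurable f) {a b : ℝ}
    (hfab : ∀ s, f s ∈ Set.Icc a b) {ε : ℝ} (hε : 0 ≤ ε) :
    P.real {ω | ε ≤ ∑ t, (f (γ t ω) - ∫ s, f s ∂ν)} ≤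
      Real.exp (-(2 * ε ^ 2) / ((b - a) ^ 2 * Fintype.card τ)) := by
  have hmean : ∀ t, ∫ ω, f (γ t ω) ∂P = ∫ s, f s ∂ν := fun t ↦ by
    rw [← hlaw t, integral_map (hγ t).aemeasurable hf.aestronglyMeasurable]
  have hsubG : ∀ t ∈ (univ : Finset τ), HasSubgaussianMGF (fun ω ↦ f (γ t ω) - ∫ s, f s ∂ν)
      ((‖b - a‖₊ / 2) ^ 2) P := fun t _ ↦
    hmean t ▸ hasSubgaussianMGF_of_mem_Icc (X := fun ω ↦ f (γ t ω))
      (hf.comp (hγ t)).aemeasurable (ae_of_all _ fun ω ↦ hfab (γ t ω))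
  have hindep_centred : iIndepFun (fun t ω ↦ f (γ t ω) - ∫ s, f s ∂ν) P :=
    hindep.comp (fun _ s ↦ f s - ∫ s, f s ∂ν) fun _ ↦ hf.sub_const _
  refine (HasSubgaussianMGF.measure_sum_ge_le_of_iIndepFun hindep_centred hsubG hε).trans_eq ?_
  have hvar : 2 * ((∑ _t : τ, (‖b - a‖₊ / 2) ^ 2 : NNReal) : ℝ) =
      (b - a) ^ 2 * Fintype.card τ / 2 := by
    simp only [sum_const, card_univ, nsmul_eq_mul, NNReal.coe_mul, NNReal.coe_natCast,
      NNReal.coe_pow, NNReal.coe_div, coe_nnnorm, Real.norm_eq_abs, NNReal.coe_ofNat, div_pow,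
      sq_abs]
    ring
  rw [hvar, div_div_eq_mul_div]
  ring_nf

theorem stmt15_general
    {Ω S : Type*} [MeasurableSpace Ω] [MeasurableSpace S]
    (P : Measure Ω) [IsProbabilityMeasure P]
    (T m d : ℕ)
    (ρ : Fin m → ℝ) (hρ : ∀ j, 0 < ρ j)
    (rbar : ℝ)
    (X : S → Set (Fin d → ℝ))
    (r : S → (Fin d → ℝ) → ℝ)
    (g : S → (Fin d → ℝ) → (Fin m → ℝ))
    (hX0 : ∀ s, (0 : Fin d → ℝ) ∈ X s)
    (hr0 : ∀ s, r s 0 = 0)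
    (hrbd : ∀ s, ∀ x ∈ X s, r s x ≤ rbar)
    (hg0 : ∀ s, g s 0 = 0)
    (hgpos : ∀ s, ∀ x ∈ X s, ∀ j, 0 ≤ g s x j)
    (γ : Fin T → Ω → S) (hγmeas : ∀ t, Measurable (γ t))
    (Pdist : Measure S)
    (hlaw : ∀ t, Measure.map (γ t) P = Pdist)
    (hindep : ProbabilityTheory.iIndepFun γ P)
    (OPT : Ω → ℝ)
    (hOPT : ∀ ω, OPT ω = sSup { v | ∃ x : Fin T → (Fin d → ℝ),
      (∀ t, x t ∈ X (γ t ω)) ∧ (∀ j, ∑ t, g (γ t ω) (x t) j ≤ (T : ℝ) * ρ j) ∧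
      v = ∑ t, r (γ t ω) (x t) })
    (μ : Fin m → ℝ) (hμ : ∀ j, 0 ≤ μ j)
    (rstar : S → ℝ)
    (hrstar : ∀ s, rstar s = sSup { v | ∃ x ∈ X s, v = r s x - ∑ j, μ j * g s x j })
    (hrstarmeas : Measurable rstar)
    (Dbar : ℝ) (hDbar : Dbar = (∫ s, rstar s ∂Pdist) + ∑ j, μ j * ρ j)
    (y : ℝ) (hy : 0 < y) :
    P { ω | OPT ω - (T : ℝ) * Dbar > y } ≤
      ENNReal.ofReal (Real.exp (-(2 * y ^ 2) / (rbar ^ 2 * T))) := by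
  have hrstar_mem : ∀ s, rstar s ∈ Set.Icc 0 rbar := fun s ↦ hrstar s ▸
    sSup_lagrangianValues_mem_Icc (hX0 s) (hr0 s) (hg0 s) (hrbd s) (hgpos s) hμ
  have hweak : ∀ ω, OPT ω ≤ ∑ t, rstar (γ t ω) + ∑ j, μ j * ((T : ℝ) * ρ j) := fun ω ↦ by
    simp only [hOPT, hrstar]
    exact sSup_feasibleRewards_le hμ
      (fun _ ↦ bddAbove_lagrangianValues (hrbd _) (hgpos _) hμ)
      (fun _ ↦ (hrstar _ ▸ hrstar_mem _).1)
      (sum_nonneg fun j _ ↦ mul_nonneg (hμ j) (mul_nonneg T.cast_nonneg (hρ j).le))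
  have hevent : { ω | OPT ω - (T : ℝ) * Dbar > y } ⊆
      { ω | y ≤ ∑ t, (rstar (γ t ω) - ∫ s, rstar s ∂Pdist) } := fun ω hω ↦ by
    have hcost : ∑ j, μ j * ((T : ℝ) * ρ j) = T * ∑ j, μ j * ρ j := by
      rw [mul_sum]; exact sum_congr rfl fun j _ ↦ by ring
    simp only [Set.mem_ofPred_eq, sum_sub_distrib, sum_const, card_univ, Fintype.card_fin,
      nsmul_eq_mul, hDbar, mul_add] at hω ⊢
    linarith [hweak ω]
  calc P { ω | OPT ω - (T : ℝ) * Dbar > y }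
      ≤ P { ω | y ≤ ∑ t, (rstar (γ t ω) - ∫ s, rstar s ∂Pdist) } := measure_mono hevent
    _ = ENNReal.ofReal (P.real { ω | y ≤ ∑ t, (rstar (γ t ω) - ∫ s, rstar s ∂Pdist) }) :=
        (ofReal_measureReal).symm
    _ ≤ ENNReal.ofReal (Real.exp (-(2 * y ^ 2) / (rbar ^ 2 * T))) := by
        gcongr
        simpa only [sub_zero, Fintype.card_fin] using
          measureReal_sum_comp_sub_integral_ge_le hγmeas hlaw hindep hrstarmeas hrstar_mem hy.le

/-- Upper-tail concentration of the offline optimum (weak duality + Hoeffding). -/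
theorem stmt15
    {Ω S : Type*} [MeasurableSpace Ω] [MeasurableSpace S]
    (P : Measure Ω) [IsProbabilityMeasure P]
    (T m d : ℕ) (hT : 0 < T) (hm : 0 < m)
    (ρ : Fin m → ℝ) (hρ : ∀ j, 0 < ρ j)
    (rbar : ℝ) (hrbar : 0 < rbar)
    (X : S → Set (Fin d → ℝ))
    (r : S → (Fin d → ℝ) → ℝ)
    (g : S → (Fin d → ℝ) → (Fin m → ℝ))
    (hX0 : ∀ s, (0 : Fin d → ℝ) ∈ X s)
    (hr0 : ∀ s, r s 0 = 0)
    (hrpos : ∀ s, ∀ x ∈ X s, 0 ≤ r s x)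
    (hrbd : ∀ s, ∀ x ∈ X s, r s x ≤ rbar)
    (hg0 : ∀ s, g s 0 = 0)
    (hgpos : ∀ s, ∀ x ∈ X s, ∀ j, 0 ≤ g s x j)
    (γ : Fin T → Ω → S) (hγmeas : ∀ t, Measurable (γ t))
    (Pdist : Measure S) [IsProbabilityMeasure Pdist]
    (hlaw : ∀ t, Measure.map (γ t) P = Pdist)
    (hindep : ProbabilityTheory.iIndepFun γ P)
    (OPT : Ω → ℝ)
    (hOPT : ∀ ω, OPT ω = sSup { v | ∃ x : Fin T → (Fin d → ℝ),
      (∀ t, x t ∈ X (γ t ω)) ∧ (∀ j, ∑ t, g (γ t ω) (x t) j ≤ (T : ℝ) * ρ j) ∧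
      v = ∑ t, r (γ t ω) (x t) })
    (hOPTmeas : Measurable OPT)
    (μ : Fin m → ℝ) (hμ : ∀ j, 0 ≤ μ j)
    (rstar : S → ℝ)
    (hrstar : ∀ s, rstar s = sSup { v | ∃ x ∈ X s, v = r s x - ∑ j, μ j * g s x j })
    (hrstarmeas : Measurable rstar)
    (Dbar : ℝ) (hDbar : Dbar = (∫ s, rstar s ∂Pdist) + ∑ j, μ j * ρ j)
    (y : ℝ) (hy : 0 < y) :
    P { ω | OPT ω - (T : ℝ) * Dbar > y } ≤
      ENNReal.ofReal (Real.exp (-(2 * y ^ 2) / (rbar ^ 2 * T))) :=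
  stmt15_general P T m d ρ hρ rbar X r g hX0 hr0 hrbd hg0 hgpos γ hγmeas Pdist hlaw hindep OPT hOPT
    μ hμ rstar hrstar hrstarmeas Dbar hDbar y hy
end

section
/- Stochastic primal–dual decomposition up to a stopping time: in the stochastic online resource allocation model, let (F_t)_{t=0}^{T} be a filtration such that γ_t is F_t-measurable and independent of F_{t−1} for every t. Let (μ_t)_{t=1}^{T} be a process with values in {μ ∈ ℝ^m : μ ≥ 0 componentwise} such that μ_t is F_{t−1}-measurable, and let (x_t)_{t=1}^{T} be such that x_t is F_t-measurable, x_t ∈ X_t, and r_t(x_t) − μ_t·g_t(x_t) = sup_{x ∈ X_t} ( r_t(x) − μ_t·g_t(x) ) almost surely. Let τ be a stopping time with respect to (F_t) taking values in {1,…,T}, and assume all quantities below are integrable. Then, with μ̄_τ = (1/τ)·Σ_{t=1}^{τ} μ_t, it holds that E[ Σ_{t=1}^{τ} r_t(x_t) ] ≥ E[ τ·D̄(μ̄_τ | P) ] − E[ Σ_{t=1}^{τ} μ_t·(ρ − g_t(x_t)) ]. -/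
/-!
Pathwise, optimality of `x_t` gives `r_t(x_t) = r*(μ_t)(γ_t) + μ_t·ρ - μ_t·(ρ - g_t(x_t))`,
and Jensen's inequality for the convex `D̄` gives
`τ D̄(μ̄_τ) ≤ ∑_{t ≤ τ} (E_P[r*(μ_t)] + μ_t·ρ)`. It remains to see that
`E ∑_{t ≤ τ} r*(μ_t)(γ_t) = E ∑_{t ≤ τ} E_P[r*(μ_t)]`: since `{t ≤ τ}` and `μ_t` are
`F_{t-1}`-measurable while `γ_t` is independent of `F_{t-1}`, `μ_t` may be frozen in each term.
Freezing needs `(ν, γ) ↦ r*(ν)(γ)` to be jointly measurable; this holds up to a null set because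
`r*` is antitone and lower semicontinuous in `ν`, hence determined by its values at rational `ν`.
-/

open MeasureTheory ProbabilityTheory Finset

section LagrangianSup

variable {E ι : Type*} [Fintype ι] {A : Set E} {r : E → ℝ} {g : E → ι → ℝ} {rbar : ℝ}
  {ν : ι → ℝ}

noncomputable def lagrangianSup (A : Set E) (r : E → ℝ) (g : E → ι → ℝ) (ν : ι → ℝ) : ℝ :=
  sSup {v | ∃ x ∈ A, v = r x - ∑ j, ν j * g x j}

lemma mem_upperBounds_lagrangian (hr : ∀ x ∈ A, r x ≤ rbar) (hg : ∀ x ∈ A, ∀ j, 0 ≤ g x j)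
    (hν : 0 ≤ ν) : rbar ∈ upperBounds {v | ∃ x ∈ A, v = r x - ∑ j, ν j * g x j} := by
  rintro _ ⟨x, hx, rfl⟩
  have : 0 ≤ ∑ j, ν j * g x j := sum_nonneg fun j _ => mul_nonneg (hν j) (hg x hx j)
  linarith [hr x hx]

lemma sub_le_lagrangianSup (hr : ∀ x ∈ A, r x ≤ rbar) (hg : ∀ x ∈ A, ∀ j, 0 ≤ g x j)
    (hν : 0 ≤ ν) {x : E} (hx : x ∈ A) : r x - ∑ j, ν j * g x j ≤ lagrangianSup A r g ν :=
  le_csSup ⟨rbar, mem_upperBounds_lagrangian hr hg hν⟩ ⟨x, hx, rfl⟩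

lemma lagrangianSup_le (hA : A.Nonempty) (hr : ∀ x ∈ A, r x ≤ rbar)
    (hg : ∀ x ∈ A, ∀ j, 0 ≤ g x j) (hν : 0 ≤ ν) : lagrangianSup A r g ν ≤ rbar := by
  obtain ⟨x, hx⟩ := hA
  exact csSup_le ⟨_, x, hx, rfl⟩ (mem_upperBounds_lagrangian hr hg hν)

lemma lagrangianSup_nonneg {x₀ : E} (hx₀ : x₀ ∈ A) (hr₀ : r x₀ = 0) (hg₀ : g x₀ = 0)
    (hr : ∀ x ∈ A, r x ≤ rbar) (hg : ∀ x ∈ A, ∀ j, 0 ≤ g x j) (hν : 0 ≤ ν) :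
    0 ≤ lagrangianSup A r g ν := by
  simpa [hr₀, hg₀] using sub_le_lagrangianSup hr hg hν hx₀

lemma antitoneOn_lagrangianSup (hA : A.Nonempty) (hr : ∀ x ∈ A, r x ≤ rbar)
    (hg : ∀ x ∈ A, ∀ j, 0 ≤ g x j) : AntitoneOn (lagrangianSup A r g) (Set.Ici 0) := by
  intro ν hν ν' _ hνν'
  obtain ⟨x₀, hx₀⟩ := hA
  refine csSup_le ⟨_, x₀, hx₀, rfl⟩ ?_
  rintro _ ⟨x, hx, rfl⟩
  have : ∑ j, ν j * g x j ≤ ∑ j, ν' j * g x j :=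
    sum_le_sum fun j _ => mul_le_mul_of_nonneg_right (hνν' j) (hg x hx j)
  linarith [sub_le_lagrangianSup hr hg hν hx]

lemma lowerSemicontinuousOn_lagrangianSup (hA : A.Nonempty) (hr : ∀ x ∈ A, r x ≤ rbar)
    (hg : ∀ x ∈ A, ∀ j, 0 ≤ g x j) : LowerSemicontinuousOn (lagrangianSup A r g) (Set.Ici 0) := by
  intro ν _ y hy
  obtain ⟨x₀, hx₀⟩ := hA
  obtain ⟨_, ⟨x, hx, rfl⟩, hyx⟩ := exists_lt_of_lt_csSup
    (s := {v | ∃ x ∈ A, v = r x - ∑ j, ν j * g x j}) ⟨_, x₀, hx₀, rfl⟩ hy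
  have hcont : Continuous fun ν : ι → ℝ => r x - ∑ j, ν j * g x j := by fun_prop
  filter_upwards [nhdsWithin_le_nhds ((hcont.tendsto ν).eventually_const_lt hyx),
    self_mem_nhdsWithin] with ν' hν' hν'0
  exact hν'.trans_le (sub_le_lagrangianSup hr hg hν'0 hx)

lemma abs_lagrangianSup_le {x₀ : E} (hx₀ : x₀ ∈ A) (hr₀ : r x₀ = 0) (hg₀ : g x₀ = 0)
    (hr : ∀ x ∈ A, r x ≤ rbar) (hg : ∀ x ∈ A, ∀ j, 0 ≤ g x j) (hν : 0 ≤ ν) :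
    |lagrangianSup A r g ν| ≤ rbar :=
  (abs_of_nonneg (lagrangianSup_nonneg hx₀ hr₀ hg₀ hr hg hν)).trans_le
    (lagrangianSup_le ⟨x₀, hx₀⟩ hr hg hν)

end LagrangianSup

lemma exists_ratCast_ge_mem_nhds {ι : Type*} [Fintype ι] {ν : ι → ℝ} {U : Set (ι → ℝ)}
    (hU : U ∈ nhds ν) : ∃ q : ι → ℚ, ν ≤ (fun j => (q j : ℝ)) ∧ (fun j => (q j : ℝ)) ∈ U := by
  obtain ⟨ε, hε, hball⟩ := Metric.mem_nhds_iff.mp hU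
  choose q hq using fun j => exists_rat_btwn (lt_add_of_pos_right (ν j) hε)
  refine ⟨q, fun j => (hq j).1.le, hball ?_⟩
  rw [Metric.mem_ball, dist_pi_lt_iff hε]
  intro j
  rw [Real.dist_eq, abs_lt]
  constructor <;> linarith [hq j]

/-- The version is `ν ↦ ⨆ q, f q` over rational `q ≥ ν`, with each `f q` replaced by a
measurable version; monotonicity and lower semicontinuity make it agree with `f ν`. -/
theorem exists_measurable_uncurry_ae_eq_of_antitoneOn {ι S : Type*} [Fintype ι]
    [MeasurableSpace S] {Pd : Measure S} {f : (ι → ℝ) → S → ℝ}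
    (hf_meas : ∀ ν, 0 ≤ ν → AEStronglyMeasurable (f ν) Pd)
    (hf_nonneg : ∀ ν, 0 ≤ ν → ∀ s, 0 ≤ f ν s)
    (hf_anti : ∀ s, AntitoneOn (f · s) (Set.Ici 0))
    (hf_lsc : ∀ s, LowerSemicontinuousOn (f · s) (Set.Ici 0)) :
    ∃ φ : (ι → ℝ) → S → ℝ, Measurable (Function.uncurry φ) ∧
      ∀ᵐ s ∂Pd, ∀ ν, 0 ≤ ν → φ ν s = f ν s := by
  classical
  let c : (ι → ℚ) → ι → ℝ := fun q j => q j
  have hversion : ∀ q, ∃ G : S → ℝ, Measurable G ∧ (0 ≤ c q → G =ᵐ[Pd] f (c q)) := by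
    intro q
    by_cases hq : 0 ≤ c q
    · exact ⟨_, (hf_meas _ hq).stronglyMeasurable_mk.measurable,
        fun _ => (hf_meas _ hq).ae_eq_mk.symm⟩
    · exact ⟨0, measurable_const, fun h => absurd h hq⟩
  choose G hG_meas hG using hversion
  have hG_ae : ∀ᵐ s ∂Pd, ∀ q, 0 ≤ c q → G q s = f (c q) s := by
    rw [ae_all_iff]
    intro q
    by_cases hq : 0 ≤ c q
    · filter_upwards [hG q hq] with s hs using fun _ => hs
    · exact Filter.Eventually.of_forall fun s h => absurd h hq
  refine ⟨fun ν s => ⨆ q, if ν ≤ c q then G q s else 0, ?_, ?_⟩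
  · refine Measurable.iSup fun q => Measurable.ite ?_ ((hG_meas q).comp measurable_snd)
      measurable_const
    exact measurableSet_le measurable_fst measurable_const
  filter_upwards [hG_ae] with s hs ν hν
  have hle : ∀ q, (if ν ≤ c q then G q s else 0) ≤ f ν s := by
    intro q
    split_ifs with hq
    · rw [hs q (hν.trans hq)]
      exact hf_anti s hν (hν.trans hq) hq
    · exact hf_nonneg ν hν s
  refine le_antisymm (ciSup_le hle) (le_of_forall_lt fun y hy => ?_)
  have hnear := hf_lsc s ν hν y hy
  rw [eventually_nhdsWithin_iff] at hnear
  obtain ⟨q, hνq, hq⟩ := exists_ratCast_ge_mem_nhds hnear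
  have hq0 : 0 ≤ c q := hν.trans hνq
  calc y < f (c q) s := hq hq0
    _ = if ν ≤ c q then G q s else 0 := by rw [if_pos hνq, hs q hq0]
    _ ≤ ⨆ q, if ν ≤ c q then G q s else 0 := le_ciSup ⟨f ν s, Set.forall_mem_range.2 hle⟩ q

theorem exists_measurable_uncurry_ae_eq_lagrangianSup {E ι S : Type*} [Fintype ι]
    [MeasurableSpace S] {Pd : Measure S} {X : S → Set E} {r : S → E → ℝ} {g : S → E → ι → ℝ}
    {rbar : ℝ} {x₀ : E} (hx₀ : ∀ s, x₀ ∈ X s) (hr₀ : ∀ s, r s x₀ = 0) (hg₀ : ∀ s, g s x₀ = 0)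
    (hr : ∀ s, ∀ x ∈ X s, r s x ≤ rbar) (hg : ∀ s, ∀ x ∈ X s, ∀ j, 0 ≤ g s x j)
    {f : (ι → ℝ) → S → ℝ} (hf : ∀ ν s, f ν s = lagrangianSup (X s) (r s) (g s) ν)
    (hf_meas : ∀ ν, 0 ≤ ν → AEStronglyMeasurable (f ν) Pd) :
    ∃ φ : (ι → ℝ) → S → ℝ, Measurable (Function.uncurry φ) ∧
      ∀ᵐ s ∂Pd, ∀ ν, 0 ≤ ν → φ ν s = f ν s := by
  have hf_fun (s : S) : (f · s) = lagrangianSup (X s) (r s) (g s) := funext fun ν => hf ν s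
  refine exists_measurable_uncurry_ae_eq_of_antitoneOn hf_meas
    (fun ν hν s => hf ν s ▸ lagrangianSup_nonneg (hx₀ s) (hr₀ s) (hg₀ s) (hr s) (hg s) hν)
    (fun s => ?_) (fun s => ?_)
  · exact hf_fun s ▸ antitoneOn_lagrangianSup ⟨x₀, hx₀ s⟩ (hr s) (hg s)
  · exact hf_fun s ▸ lowerSemicontinuousOn_lagrangianSup ⟨x₀, hx₀ s⟩ (hr s) (hg s)

section Independence

variable {Ω α S : Type*} {F : MeasurableSpace Ω} [m0 : MeasurableSpace Ω] [MeasurableSpace α]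
  [MeasurableSpace S] {P : Measure Ω} {γ : Ω → S} {Φ : α → S → ℝ}

lemma indepFun_of_indep_of_measurable {W : Ω → α} (hW : Measurable[F] W)
    (hind : Indep (MeasurableSpace.comap γ ‹_›) F P) : IndepFun W γ P :=
  (IndepFun_iff_Indep _ _ P).mpr (indep_of_indep_of_le_right hind hW.comap_le).symm

variable [IsProbabilityMeasure P]

theorem integral_comp_eq_integral_integral_of_indepFun {W : Ω → α} (hW : Measurable W)
    (hγ : Measurable γ) (hind : IndepFun W γ P) (hΦ : Measurable (Function.uncurry Φ))
    (hint : Integrable (fun ω => Φ (W ω) (γ ω)) P) :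
    Integrable (fun ω => ∫ s, Φ (W ω) s ∂P.map γ) P ∧
      ∫ ω, Φ (W ω) (γ ω) ∂P = ∫ ω, ∫ s, Φ (W ω) s ∂P.map γ ∂P := by
  have hmap : P.map (fun ω => (W ω, γ ω)) = (P.map W).prod (P.map γ) :=
    (indepFun_iff_map_prod_eq_prod_map_map hW.aemeasurable hγ.aemeasurable).mp hind
  have hΦint : Integrable (Function.uncurry Φ) ((P.map W).prod (P.map γ)) := by
    rw [← hmap]
    exact (integrable_map_measure hΦ.aestronglyMeasurable (hW.prodMk hγ).aemeasurable).mpr hint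
  have hsection : AEStronglyMeasurable (fun a => ∫ s, Φ a s ∂P.map γ) (P.map W) :=
    hΦ.stronglyMeasurable.integral_prod_right'.aestronglyMeasurable
  refine ⟨(integrable_map_measure hsection hW.aemeasurable).mp hΦint.integral_prod_left, ?_⟩
  calc ∫ ω, Φ (W ω) (γ ω) ∂P
      = ∫ p, Function.uncurry Φ p ∂P.map (fun ω => (W ω, γ ω)) :=
        (integral_map (hW.prodMk hγ).aemeasurable hΦ.aestronglyMeasurable).symm
    _ = ∫ a, ∫ s, Φ a s ∂P.map γ ∂P.map W := by rw [hmap, integral_prod _ hΦint]; rfl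
    _ = ∫ ω, ∫ s, Φ (W ω) s ∂P.map γ ∂P := integral_map hW.aemeasurable hsection

theorem setIntegral_comp_eq_setIntegral_integral_of_indep (hF : F ≤ m0) {A : Set Ω}
    (hA : MeasurableSet[F] A) {W : Ω → α} (hW : Measurable[F] W)
    (hγ : Measurable γ) (hind : Indep (MeasurableSpace.comap γ ‹_›) F P)
    (hΦ : Measurable (Function.uncurry Φ)) (hint : Integrable (fun ω => Φ (W ω) (γ ω)) P) :
    ∫ ω in A, Φ (W ω) (γ ω) ∂P = ∫ ω in A, ∫ s, Φ (W ω) s ∂P.map γ ∂P := by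
  have hWA : Measurable[F] fun ω => (A.indicator (fun _ => (1 : ℝ)) ω, W ω) :=
    (measurable_const.indicator hA).prodMk hW
  have hindWA : IndepFun (fun ω => (A.indicator (fun _ => (1 : ℝ)) ω, W ω)) γ P :=
    indepFun_of_indep_of_measurable hWA hind
  have hΦA : Measurable (Function.uncurry fun (p : ℝ × α) s => p.1 * Φ p.2 s) :=
    (measurable_fst.comp measurable_fst).mul
      (hΦ.comp ((measurable_snd.comp measurable_fst).prodMk measurable_snd))
  have hone (h : Ω → ℝ) : (fun ω => A.indicator (fun _ => (1 : ℝ)) ω * h ω) = A.indicator h := by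
    ext ω
    by_cases hω : ω ∈ A <;> simp [hω]
  have hintA : Integrable (fun ω => A.indicator (fun _ => (1 : ℝ)) ω * Φ (W ω) (γ ω)) P := by
    rw [hone fun ω => Φ (W ω) (γ ω)]
    exact hint.indicator (hF _ hA)
  have key := (integral_comp_eq_integral_integral_of_indepFun (hWA.mono hF le_rfl) hγ hindWA
    hΦA hintA).2
  simp only [integral_const_mul] at key
  rwa [hone, hone, integral_indicator (hF _ hA), integral_indicator (hF _ hA)] at key

end Independence

lemma sum_Icc_eq_sum_Icc_indicator {Ω : Type*} {τ : Ω → ℕ} {T : ℕ} (hτT : ∀ ω, τ ω ≤ T)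
    (F : ℕ → Ω → ℝ) (ω : Ω) :
    ∑ t ∈ Icc 1 (τ ω), F t ω = ∑ t ∈ Icc 1 T, {ω | t ≤ τ ω}.indicator (F t) ω := by
  simp only [Set.indicator_apply, Set.mem_ofPred_eq, ← sum_filter]
  congr 1
  ext t
  simp only [mem_Icc, mem_filter]
  have := hτT ω
  omega

section StoppedSums

variable {Ω : Type*} [MeasurableSpace Ω] {P : Measure Ω} {τ : Ω → ℕ} {T : ℕ} {F : ℕ → Ω → ℝ}

lemma integrable_sum_Icc_stopped (hτT : ∀ ω, τ ω ≤ T)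
    (hτm : ∀ t, 1 ≤ t → t ≤ T → MeasurableSet {ω | t ≤ τ ω})
    (hF : ∀ t, 1 ≤ t → t ≤ T → Integrable (F t) P) :
    Integrable (fun ω => ∑ t ∈ Icc 1 (τ ω), F t ω) P := by
  simp_rw [sum_Icc_eq_sum_Icc_indicator hτT]
  refine integrable_finsetSum _ fun t ht => ?_
  rw [mem_Icc] at ht
  exact (hF t ht.1 ht.2).indicator (hτm t ht.1 ht.2)

lemma integral_sum_Icc_stopped (hτT : ∀ ω, τ ω ≤ T)
    (hτm : ∀ t, 1 ≤ t → t ≤ T → MeasurableSet {ω | t ≤ τ ω})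
    (hF : ∀ t, 1 ≤ t → t ≤ T → Integrable (F t) P) :
    ∫ ω, ∑ t ∈ Icc 1 (τ ω), F t ω ∂P = ∑ t ∈ Icc 1 T, ∫ ω in {ω | t ≤ τ ω}, F t ω ∂P := by
  simp_rw [sum_Icc_eq_sum_Icc_indicator hτT]
  rw [integral_finsetSum]
  · refine sum_congr rfl fun t ht => ?_
    rw [mem_Icc] at ht
    exact integral_indicator (hτm t ht.1 ht.2)
  · intro t ht
    rw [mem_Icc] at ht
    exact (hF t ht.1 ht.2).indicator (hτm t ht.1 ht.2)

end StoppedSums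

section Wald

variable {Ω α S : Type*} [m0 : MeasurableSpace Ω] [MeasurableSpace α] [MeasurableSpace S]
  {P : Measure Ω} [IsProbabilityMeasure P] {ℱ : Filtration ℕ m0} {τ : Ω → ℕ} {T : ℕ}
  {W : ℕ → Ω → α} {γ : ℕ → Ω → S} {Pd : Measure S}

lemma measurableSet_le_of_isStoppingTime (hτ : IsStoppingTime ℱ fun ω => (τ ω : WithTop ℕ))
    {t : ℕ} (ht : 1 ≤ t) : MeasurableSet[ℱ (t - 1)] {ω | t ≤ τ ω} := by
  convert hτ.measurableSet_gt (t - 1) using 1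
  ext ω
  simp only [Set.mem_ofPred_eq, ENat.some_eq_natCast, Nat.cast_lt]
  omega

theorem integral_sum_Icc_stopped_comp_eq (hτ : IsStoppingTime ℱ fun ω => (τ ω : WithTop ℕ))
    (hτT : ∀ ω, τ ω ≤ T) (hW : ∀ t, 1 ≤ t → t ≤ T → Measurable[ℱ (t - 1)] (W t))
    (hγ : ∀ t, 1 ≤ t → t ≤ T → Measurable (γ t))
    (hind : ∀ t, 1 ≤ t → t ≤ T → Indep (MeasurableSpace.comap (γ t) ‹_›) (ℱ (t - 1)) P)
    (hlaw : ∀ t, 1 ≤ t → t ≤ T → P.map (γ t) = Pd)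
    {Φ : α → S → ℝ} (hΦ : Measurable (Function.uncurry Φ))
    (hint : ∀ t, 1 ≤ t → t ≤ T → Integrable (fun ω => Φ (W t ω) (γ t ω)) P) :
    Integrable (fun ω => ∑ t ∈ Icc 1 (τ ω), ∫ s, Φ (W t ω) s ∂Pd) P ∧
      ∫ ω, ∑ t ∈ Icc 1 (τ ω), Φ (W t ω) (γ t ω) ∂P =
        ∫ ω, ∑ t ∈ Icc 1 (τ ω), ∫ s, Φ (W t ω) s ∂Pd ∂P := by
  have hτm (t : ℕ) (ht : 1 ≤ t) (_ : t ≤ T) : MeasurableSet {ω | t ≤ τ ω} :=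
    ℱ.le _ _ (measurableSet_le_of_isStoppingTime hτ ht)
  have hint' (t : ℕ) (h1 : 1 ≤ t) (h2 : t ≤ T) :
      Integrable (fun ω => ∫ s, Φ (W t ω) s ∂Pd) P := by
    rw [← hlaw t h1 h2]
    exact (integral_comp_eq_integral_integral_of_indepFun ((hW t h1 h2).mono (ℱ.le _) le_rfl)
      (hγ t h1 h2) (indepFun_of_indep_of_measurable (hW t h1 h2) (hind t h1 h2)) hΦ
      (hint t h1 h2)).1
  refine ⟨integrable_sum_Icc_stopped hτT hτm hint', ?_⟩
  rw [integral_sum_Icc_stopped hτT hτm hint, integral_sum_Icc_stopped hτT hτm hint']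
  refine sum_congr rfl fun t ht => ?_
  obtain ⟨h1, h2⟩ := mem_Icc.mp ht
  rw [← hlaw t h1 h2]
  exact setIntegral_comp_eq_setIntegral_integral_of_indep (ℱ.le _)
    (measurableSet_le_of_isStoppingTime hτ h1) (hW t h1 h2) (hγ t h1 h2) (hind t h1 h2) hΦ
    (hint t h1 h2)

theorem integral_sum_Icc_stopped_comp_eq_of_ae_eq
    (hτ : IsStoppingTime ℱ fun ω => (τ ω : WithTop ℕ))
    (hτT : ∀ ω, τ ω ≤ T) (hW : ∀ t, 1 ≤ t → t ≤ T → Measurable[ℱ (t - 1)] (W t))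
    (hγ : ∀ t, 1 ≤ t → t ≤ T → Measurable (γ t))
    (hind : ∀ t, 1 ≤ t → t ≤ T → Indep (MeasurableSpace.comap (γ t) ‹_›) (ℱ (t - 1)) P)
    (hlaw : ∀ t, 1 ≤ t → t ≤ T → P.map (γ t) = Pd)
    {f φ : α → S → ℝ} {K : Set α} {C : ℝ} (hφ : Measurable (Function.uncurry φ))
    (hφf : ∀ᵐ s ∂Pd, ∀ a ∈ K, φ a s = f a s) (hfC : ∀ a ∈ K, ∀ s, |f a s| ≤ C)
    (hWK : ∀ t ω, W t ω ∈ K) :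
    Integrable (fun ω => ∑ t ∈ Icc 1 (τ ω), f (W t ω) (γ t ω)) P ∧
      Integrable (fun ω => ∑ t ∈ Icc 1 (τ ω), ∫ s, f (W t ω) s ∂Pd) P ∧
      ∫ ω, ∑ t ∈ Icc 1 (τ ω), f (W t ω) (γ t ω) ∂P =
        ∫ ω, ∑ t ∈ Icc 1 (τ ω), ∫ s, f (W t ω) s ∂Pd ∂P := by
  have hcomp (t : ℕ) (h1 : 1 ≤ t) (h2 : t ≤ T) :
      ∀ᵐ ω ∂P, φ (W t ω) (γ t ω) = f (W t ω) (γ t ω) := by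
    have hφf' : ∀ᵐ s ∂P.map (γ t), ∀ a ∈ K, φ a s = f a s := hlaw t h1 h2 ▸ hφf
    filter_upwards [ae_of_ae_map (hγ t h1 h2).aemeasurable hφf'] with ω hω
    exact hω _ (hWK t ω)
  have hsection (t : ℕ) (ω : Ω) : ∫ s, φ (W t ω) s ∂Pd = ∫ s, f (W t ω) s ∂Pd :=
    integral_congr_ae (hφf.mono fun s hs => hs _ (hWK t ω))
  have hint (t : ℕ) (h1 : 1 ≤ t) (h2 : t ≤ T) :
      Integrable (fun ω => φ (W t ω) (γ t ω)) P := by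
    refine Integrable.mono' (integrable_const C)
      (hφ.comp (((hW t h1 h2).mono (ℱ.le _) le_rfl).prodMk (hγ t h1 h2))).aestronglyMeasurable ?_
    filter_upwards [hcomp t h1 h2] with ω hω
    rw [Real.norm_eq_abs, hω]
    exact hfC _ (hWK t ω) _
  obtain ⟨hint_section, hwald⟩ :=
    integral_sum_Icc_stopped_comp_eq hτ hτT hW hγ hind hlaw hφ hint
  have hsum : ∀ᵐ ω ∂P, ∑ t ∈ Icc 1 (τ ω), φ (W t ω) (γ t ω) =
      ∑ t ∈ Icc 1 (τ ω), f (W t ω) (γ t ω) := by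
    filter_upwards [(Filter.eventually_all_finset (Icc 1 T)).2 fun t ht =>
      hcomp t (mem_Icc.mp ht).1 (mem_Icc.mp ht).2] with ω hω
    refine sum_congr rfl fun t ht => hω t (mem_Icc.mpr ⟨(mem_Icc.mp ht).1, ?_⟩)
    exact (mem_Icc.mp ht).2.trans (hτT ω)
  simp only [hsection] at hint_section hwald
  refine ⟨(integrable_sum_Icc_stopped (P := P) hτT (fun t h1 _ => ℱ.le _ _
    (measurableSet_le_of_isStoppingTime hτ h1)) hint).congr hsum, hint_section, ?_⟩
  rwa [integral_congr_ae hsum] at hwald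

end Wald

theorem ConvexOn.mul_map_avg_le {ι κ : Type*} {s : Set (κ → ℝ)} {f : (κ → ℝ) → ℝ}
    (hf : ConvexOn ℝ s f) {t : Finset ι} (ht : t.Nonempty) {p : ι → κ → ℝ}
    (hp : ∀ i ∈ t, p i ∈ s) :
    (#t : ℝ) * f (fun j => (∑ i ∈ t, p i j) / #t) ≤ ∑ i ∈ t, f (p i) := by
  have hcard : (0 : ℝ) < #t := by exact_mod_cast ht.card_pos
  have havg : (fun j => (∑ i ∈ t, p i j) / #t) = ∑ i ∈ t, (#t : ℝ)⁻¹ • p i := by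
    ext j
    simp [Finset.sum_apply, div_eq_inv_mul, mul_sum]
  have hjensen := hf.map_sum_le (fun _ _ => inv_nonneg.mpr hcard.le)
    (by simp [hcard.ne']) hp
  rw [havg]
  calc (#t : ℝ) * f (∑ i ∈ t, (#t : ℝ)⁻¹ • p i)
      ≤ #t * ∑ i ∈ t, (#t : ℝ)⁻¹ • f (p i) := mul_le_mul_of_nonneg_left hjensen hcard.le
    _ = ∑ i ∈ t, f (p i) := by simp [smul_eq_mul, ← mul_sum, hcard.ne']

lemma sum_eq_sum_add_sum_sub_sum_of_sub_eq {κ ι : Type*} [Fintype ι] {I : Finset κ}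
    {R V : κ → ℝ} {ν G : κ → ι → ℝ} (ρ : ι → ℝ) (h : ∀ t ∈ I, R t - ∑ j, ν t j * G t j = V t) :
    ∑ t ∈ I, R t =
      ∑ t ∈ I, V t + ∑ t ∈ I, ∑ j, ν t j * ρ j - ∑ t ∈ I, ∑ j, ν t j * (ρ j - G t j) := by
  rw [← sum_add_distrib, ← sum_sub_distrib]
  refine sum_congr rfl fun t ht => ?_
  rw [← h t ht]
  simp only [mul_sub, sum_sub_distrib]
  ring

theorem stmt16_general
    {Ω S : Type*} [MeasurableSpace S] [m0 : MeasurableSpace Ω]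
    (P : Measure Ω) [IsProbabilityMeasure P]
    (T m d : ℕ)
    (ρ : Fin m → ℝ)
    (rbar : ℝ)
    (X : S → Set (Fin d → ℝ))
    (r : S → (Fin d → ℝ) → ℝ)
    (g : S → (Fin d → ℝ) → (Fin m → ℝ))
    (hX0 : ∀ s, (0 : Fin d → ℝ) ∈ X s)
    (hr0 : ∀ s, r s 0 = 0)
    (hrbd : ∀ s, ∀ x ∈ X s, r s x ≤ rbar)
    (hg0 : ∀ s, g s 0 = 0)
    (hgpos : ∀ s, ∀ x ∈ X s, ∀ j, 0 ≤ g s x j)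
    (ℱ : Filtration ℕ m0)
    (γ : ℕ → Ω → S)
    (hγmeas : ∀ t, 1 ≤ t → t ≤ T → Measurable[ℱ t] (γ t))
    (hγindep : ∀ t, 1 ≤ t → t ≤ T →
      ProbabilityTheory.Indep (MeasurableSpace.comap (γ t) inferInstance) (ℱ (t - 1)) P)
    (Pdist : Measure S)
    (hlaw : ∀ t, 1 ≤ t → t ≤ T → Measure.map (γ t) P = Pdist)
    (rstar : (Fin m → ℝ) → S → ℝ)
    (hrstar : ∀ ν s, rstar ν s =
      sSup { v | ∃ x ∈ X s, v = r s x - ∑ j, ν j * g s x j })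
    (hrstarint : ∀ ν : Fin m → ℝ, (∀ j, 0 ≤ ν j) → Integrable (rstar ν) Pdist)
    (Dbar : (Fin m → ℝ) → ℝ)
    (hDbar : ∀ ν, Dbar ν = (∫ s, rstar ν s ∂Pdist) + ∑ j, ν j * ρ j)
    (hDconvex : ConvexOn ℝ { ν : Fin m → ℝ | ∀ j, 0 ≤ ν j } Dbar)
    (μ : ℕ → Ω → Fin m → ℝ)
    (hμpos : ∀ t ω j, 0 ≤ μ t ω j)
    (hμmeas : ∀ t, 1 ≤ t → t ≤ T → Measurable[ℱ (t - 1)] (μ t))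
    (x : ℕ → Ω → Fin d → ℝ)
    (hgreedy : ∀ t, 1 ≤ t → t ≤ T → ∀ᵐ ω ∂P, x t ω ∈ X (γ t ω) ∧
      r (γ t ω) (x t ω) - (∑ j, μ t ω j * g (γ t ω) (x t ω) j) =
        rstar (μ t ω) (γ t ω))
    (τ : Ω → ℕ) (hτ : IsStoppingTime ℱ (fun ω => (τ ω : WithTop ℕ)))
    (hτrange : ∀ ω, 1 ≤ τ ω ∧ τ ω ≤ T)
    (hint1 : Integrable (fun ω => ∑ t ∈ Finset.Icc 1 (τ ω), r (γ t ω) (x t ω)) P)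
    (hint2 : Integrable (fun ω => (τ ω : ℝ) *
      Dbar (fun j => (∑ t ∈ Finset.Icc 1 (τ ω), μ t ω j) / (τ ω : ℝ))) P)
    (hint3 : Integrable (fun ω =>
      ∑ t ∈ Finset.Icc 1 (τ ω), ∑ j, μ t ω j * (ρ j - g (γ t ω) (x t ω) j)) P) :
    ∫ ω, (∑ t ∈ Finset.Icc 1 (τ ω), r (γ t ω) (x t ω)) ∂P ≥
      (∫ ω, (τ ω : ℝ) *
        Dbar (fun j => (∑ t ∈ Finset.Icc 1 (τ ω), μ t ω j) / (τ ω : ℝ)) ∂P) -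
      ∫ ω, (∑ t ∈ Finset.Icc 1 (τ ω), ∑ j, μ t ω j * (ρ j - g (γ t ω) (x t ω) j)) ∂P := by
  have hrstar_abs : ∀ ν ∈ Set.Ici (0 : Fin m → ℝ), ∀ s, |rstar ν s| ≤ rbar := fun ν hν s =>
    hrstar ν s ▸ abs_lagrangianSup_le (hX0 s) (hr0 s) (hg0 s) (hrbd s) (hgpos s) hν
  obtain ⟨φ, hφ, hφ_ae⟩ := exists_measurable_uncurry_ae_eq_lagrangianSup hX0 hr0 hg0 hrbd hgpos
    hrstar fun ν hν => (hrstarint ν hν).aestronglyMeasurable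
  obtain ⟨hint_rstar, hint_dual, hwald⟩ := integral_sum_Icc_stopped_comp_eq_of_ae_eq hτ
    (fun ω => (hτrange ω).2) hμmeas (fun t h1 h2 => (hγmeas t h1 h2).mono (ℱ.le t) le_rfl)
    hγindep hlaw hφ hφ_ae hrstar_abs (fun t ω => (hμpos t ω : 0 ≤ μ t ω))
  have hpath : ∀ᵐ ω ∂P, ∑ t ∈ Icc 1 (τ ω), r (γ t ω) (x t ω) =
      ∑ t ∈ Icc 1 (τ ω), rstar (μ t ω) (γ t ω) + ∑ t ∈ Icc 1 (τ ω), ∑ j, μ t ω j * ρ j -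
        ∑ t ∈ Icc 1 (τ ω), ∑ j, μ t ω j * (ρ j - g (γ t ω) (x t ω) j) := by
    filter_upwards [(Filter.eventually_all_finset (Icc 1 T)).2 fun t ht =>
      hgreedy t (mem_Icc.mp ht).1 (mem_Icc.mp ht).2] with ω hω
    refine sum_eq_sum_add_sum_sub_sum_of_sub_eq ρ fun t ht => (hω t ?_).2
    exact mem_Icc.mpr ⟨(mem_Icc.mp ht).1, (mem_Icc.mp ht).2.trans (hτrange ω).2⟩
  have hjensen (ω : Ω) : (τ ω : ℝ) * Dbar (fun j => (∑ t ∈ Icc 1 (τ ω), μ t ω j) / (τ ω : ℝ)) ≤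
      ∑ t ∈ Icc 1 (τ ω), ∫ s, rstar (μ t ω) s ∂Pdist + ∑ t ∈ Icc 1 (τ ω), ∑ j, μ t ω j * ρ j := by
    have := hDconvex.mul_map_avg_le (nonempty_Icc.mpr (hτrange ω).1) fun t _ => hμpos t ω
    simpa only [Nat.card_Icc, add_tsub_cancel_right, hDbar, sum_add_distrib] using this
  have hint_ρ : Integrable (fun ω => ∑ t ∈ Icc 1 (τ ω), ∑ j, μ t ω j * ρ j) P :=
    ((hint1.sub hint_rstar).add hint3).congr
      (hpath.mono fun ω h => by simp only [Pi.add_apply, Pi.sub_apply, h]; ring)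
  have hdual := integral_mono hint2 (hint_dual.add hint_ρ) hjensen
  rw [integral_add' hint_dual hint_ρ, ← hwald] at hdual
  rw [ge_iff_le, integral_congr_ae hpath, integral_sub _ hint3, integral_add hint_rstar hint_ρ]
  · linarith
  · exact hint_rstar.add hint_ρ

/-- Stochastic primal–dual decomposition up to a stopping time. -/
theorem stmt16
    {Ω S : Type*} [MeasurableSpace S] [m0 : MeasurableSpace Ω]
    (P : Measure Ω) [IsProbabilityMeasure P]
    (T m d : ℕ) (hT : 0 < T) (hm : 0 < m)
    (ρ : Fin m → ℝ) (hρ : ∀ j, 0 < ρ j)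
    (rbar : ℝ) (hrbar : 0 ≤ rbar)
    (X : S → Set (Fin d → ℝ))
    (r : S → (Fin d → ℝ) → ℝ)
    (g : S → (Fin d → ℝ) → (Fin m → ℝ))
    (hX0 : ∀ s, (0 : Fin d → ℝ) ∈ X s)
    (hr0 : ∀ s, r s 0 = 0)
    (hrpos : ∀ s, ∀ x ∈ X s, 0 ≤ r s x)
    (hrbd : ∀ s, ∀ x ∈ X s, r s x ≤ rbar)
    (hg0 : ∀ s, g s 0 = 0)
    (hgpos : ∀ s, ∀ x ∈ X s, ∀ j, 0 ≤ g s x j)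
    (ℱ : Filtration ℕ m0)
    (γ : ℕ → Ω → S)
    (hγmeas : ∀ t, 1 ≤ t → t ≤ T → Measurable[ℱ t] (γ t))
    (hγindep : ∀ t, 1 ≤ t → t ≤ T →
      ProbabilityTheory.Indep (MeasurableSpace.comap (γ t) inferInstance) (ℱ (t - 1)) P)
    (Pdist : Measure S) [IsProbabilityMeasure Pdist]
    (hlaw : ∀ t, 1 ≤ t → t ≤ T → Measure.map (γ t) P = Pdist)
    (rstar : (Fin m → ℝ) → S → ℝ)
    (hrstar : ∀ ν s, rstar ν s =
      sSup { v | ∃ x ∈ X s, v = r s x - ∑ j, ν j * g s x j })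
    (hrstarint : ∀ ν : Fin m → ℝ, (∀ j, 0 ≤ ν j) → Integrable (rstar ν) Pdist)
    (Dbar : (Fin m → ℝ) → ℝ)
    (hDbar : ∀ ν, Dbar ν = (∫ s, rstar ν s ∂Pdist) + ∑ j, ν j * ρ j)
    (hDconvex : ConvexOn ℝ { ν : Fin m → ℝ | ∀ j, 0 ≤ ν j } Dbar)
    (μ : ℕ → Ω → Fin m → ℝ)
    (hμpos : ∀ t ω j, 0 ≤ μ t ω j)
    (hμmeas : ∀ t, 1 ≤ t → t ≤ T → Measurable[ℱ (t - 1)] (μ t))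
    (x : ℕ → Ω → Fin d → ℝ)
    (hxmeas : ∀ t, 1 ≤ t → t ≤ T → Measurable[ℱ t] (x t))
    (hgreedy : ∀ t, 1 ≤ t → t ≤ T → ∀ᵐ ω ∂P, x t ω ∈ X (γ t ω) ∧
      r (γ t ω) (x t ω) - (∑ j, μ t ω j * g (γ t ω) (x t ω) j) =
        rstar (μ t ω) (γ t ω))
    (τ : Ω → ℕ) (hτ : IsStoppingTime ℱ (fun ω => (τ ω : WithTop ℕ)))
    (hτrange : ∀ ω, 1 ≤ τ ω ∧ τ ω ≤ T)
    (hint1 : Integrable (fun ω => ∑ t ∈ Finset.Icc 1 (τ ω), r (γ t ω) (x t ω)) P)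
    (hint2 : Integrable (fun ω => (τ ω : ℝ) *
      Dbar (fun j => (∑ t ∈ Finset.Icc 1 (τ ω), μ t ω j) / (τ ω : ℝ))) P)
    (hint3 : Integrable (fun ω =>
      ∑ t ∈ Finset.Icc 1 (τ ω), ∑ j, μ t ω j * (ρ j - g (γ t ω) (x t ω) j)) P) :
    ∫ ω, (∑ t ∈ Finset.Icc 1 (τ ω), r (γ t ω) (x t ω)) ∂P ≥
      (∫ ω, (τ ω : ℝ) *
        Dbar (fun j => (∑ t ∈ Finset.Icc 1 (τ ω), μ t ω j) / (τ ω : ℝ)) ∂P) -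
      ∫ ω, (∑ t ∈ Finset.Icc 1 (τ ω), ∑ j, μ t ω j * (ρ j - g (γ t ω) (x t ω) j)) ∂P :=
  stmt16_general (m0 := m0) P T m d ρ rbar X r g hX0 hr0 hrbd hg0 hgpos ℱ γ hγmeas hγindep Pdist
    hlaw rstar hrstar hrstarint Dbar hDbar hDconvex μ hμpos hμmeas x hgreedy τ hτ hτrange hint1
    hint2 hint3
end
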